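/- arXiv:1804.05660 — 6 statements merged into one kernel-verified Lean document; each statement's English description precedes it below -/
import Mathlib

section
/- Let $X$ be a Banach space with a system of projections $(P_\gamma)_{\gamma\in\Gamma}$ as above (pairwise disjoint, uniformly bounded, with shrinking dense span properties). For a finite set $F\subseteq\Gamma$ define $\rho(F) = \sup\{\|\sum_{\gamma\in F} P_\gamma^* f\| : f\in X^*, \|P_\gamma^* f\| \le 1 \text{ for all } \gamma\in F\}$. If $(F^\alpha)$ is a net of finite subsets of $\Gamma$ such that $\liminf_\alpha F^\alpha = \bigcup_\alpha \bigcap_{\beta\ge\alpha} F^\beta$ is infinite, then $\rho(F^\alpha) \to \infty$. -/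
open Filter
open scoped ENNReal NNReal

noncomputable section

variable {X : Type*} [NormedAddCommGroup X] [NormedSpace ℝ X] {Γ : Type*}

/-- The adjoint action: `P γ* f = f ∘ P γ`. -/
def Pstar (P : Γ → X →L[ℝ] X) (γ : Γ) (f : StrongDual ℝ X) : StrongDual ℝ X :=
  f.comp (P γ)

/-- The range of `f`: the set of norms of its non-zero components. -/
def ranSet (P : Γ → X →L[ℝ] X) (f : StrongDual ℝ X) : Set ℝ :=
  {r | ∃ γ, Pstar P γ f ≠ 0 ∧ ‖Pstar P γ f‖ = r}

/-- `pfun P f k` is the `k`-th largest element of `ranSet P f` (for `k ≥ 1`),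
with value `0` if fewer than `k` values exist (`sSup ∅ = 0` in `ℝ`). -/
def pfun (P : Γ → X →L[ℝ] X) (f : StrongDual ℝ X) : ℕ → ℝ
  | 0 => 0
  | 1 => sSup (ranSet P f)
  | (k + 2) => sSup {r | r ∈ ranSet P f ∧ r < pfun P f (k + 1)}

/-- `qfun P f k = p_k(f) - p_{k+1}(f)`. -/
def qfun (P : Γ → X →L[ℝ] X) (f : StrongDual ℝ X) (k : ℕ) : ℝ :=
  pfun P f k - pfun P f (k + 1)

/-- `Gset P f k = {γ ∈ supp f : ‖P γ* f‖ ≥ p_k(f)}`. -/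
def Gset (P : Γ → X →L[ℝ] X) (f : StrongDual ℝ X) (k : ℕ) : Set Γ :=
  {γ | Pstar P γ f ≠ 0 ∧ pfun P f k ≤ ‖Pstar P γ f‖}

/-- `rho P A`: the supremum, over finite subsets `S ⊆ A` and functionals `f` whose
components on `S` have norm at most `1`, of `‖∑_{γ ∈ S} P γ* f‖` (valued in `ℝ≥0∞`).
For a finite set `A` this agrees with the quantity `ρ(A)` of the paper, since `ρ`
is increasing with respect to inclusion. -/
def rho (P : Γ → X →L[ℝ] X) (A : Set Γ) : ℝ≥0∞ :=
  ⨆ (S : Finset Γ) (_ : ↑S ⊆ A) (f : StrongDual ℝ X)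
    (_ : ∀ γ ∈ S, ‖Pstar P γ f‖ ≤ 1), ENNReal.ofReal ‖∑ γ ∈ S, Pstar P γ f‖

/-- `theta P f = ∑_{k=1}^∞ q_k(f) ρ(G_k(f))`, valued in `ℝ≥0∞`. -/
def theta (P : Γ → X →L[ℝ] X) (f : StrongDual ℝ X) : ℝ≥0∞ :=
  ∑' k : ℕ, ENNReal.ofReal (qfun P f (k + 1)) * rho P (Gset P f (k + 1))

end

/-!
Pick distinct indices `γ₀, γ₁, …` in the lower limit and unit functionals `gᵢ` with
`gᵢ ∘ P γᵢ = gᵢ`. By disjointness, every partial sum `fₙ = g₀ + ⋯ + gₙ₋₁` has components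
`fₙ ∘ P γᵢ = gᵢ` for `i < n`, so `ρ(F^α) ≥ ‖fₙ‖` once `F^α` contains `γ₀, …, γₙ₋₁`, which happens
eventually. If the `fₙ` were bounded, a weak* cluster point `f` would satisfy `f ∘ P γᵢ = gᵢ` for
all `i`; but density of the span of the adjoint ranges forces `‖f ∘ P γ‖ → 0` along the cofinite
filter, contradicting `‖gᵢ‖ = 1`.
-/

open Topology

theorem StrongDual.exists_norm_eq_one_comp_eq_self {𝕜 X : Type*} [RCLike 𝕜]
    [NormedAddCommGroup X] [NormedSpace 𝕜 X] {p : X →L[𝕜] X} (hp : p.comp p = p) (hp₀ : p ≠ 0) :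
    ∃ g : StrongDual 𝕜 X, g.comp p = g ∧ ‖g‖ = 1 := by
  obtain ⟨x, hx⟩ : ∃ x, p x ≠ 0 := by
    by_contra! h
    exact hp₀ (ContinuousLinearMap.ext h)
  obtain ⟨h, -, hhx⟩ := exists_dual_vector 𝕜 (p x) (norm_ne_zero_iff.mpr hx)
  have hg₀ : h.comp p ≠ 0 := fun h0 => hx <| by
    have : h (p x) = 0 := congr($h0 x)
    rwa [hhx, RCLike.ofReal_eq_zero, norm_eq_zero] at this
  refine ⟨‖h.comp p‖⁻¹ • h.comp p, ?_, ?_⟩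
  · rw [ContinuousLinearMap.smul_comp, ContinuousLinearMap.comp_assoc, hp]
  · rw [norm_smul, norm_inv, norm_norm, inv_mul_cancel₀ (norm_ne_zero_iff.mpr hg₀)]

/-- Banach–Alaoglu: a weak* cluster point of `u` does it. -/
theorem StrongDual.exists_comp_eq_of_norm_le {𝕜 X κ : Type*} [NontriviallyNormedField 𝕜]
    [ProperSpace 𝕜] [NormedAddCommGroup X] [NormedSpace 𝕜 X] (T : κ → X →L[𝕜] X)
    {u : ℕ → StrongDual 𝕜 X} {M : ℝ} (hu : ∀ n, ‖u n‖ ≤ M) (c : κ → StrongDual 𝕜 X)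
    (hc : ∀ i, ∀ᶠ n in atTop, (u n).comp (T i) = c i) :
    ∃ f : StrongDual 𝕜 X, ∀ i, f.comp (T i) = c i := by
  obtain ⟨f, -, hf⟩ := (WeakDual.isCompact_closedBall (𝕜 := 𝕜) (0 : StrongDual 𝕜 X) M)
    |>.exists_mapClusterPt (f := atTop) (u := fun n => StrongDual.toWeakDual (u n))
      (tendsto_principal.mpr <| Eventually.of_forall fun n => by simpa using hu n)
  refine ⟨WeakDual.toStrongDual f, fun i => ?_⟩
  let φ : WeakDual 𝕜 X → WeakDual 𝕜 X :=
    fun f => StrongDual.toWeakDual ((WeakDual.toStrongDual f).comp (T i))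
  have hφ : Continuous φ := by
    apply WeakDual.continuous_of_continuous_eval
    exact fun x => WeakDual.eval_continuous (T i x)
  have hlim : Tendsto (fun n => φ (StrongDual.toWeakDual (u n))) atTop
      (𝓝 (StrongDual.toWeakDual (c i))) :=
    tendsto_const_nhds.congr' <| (hc i).mono fun n hn => by simp [φ, hn]
  exact congrArg WeakDual.toStrongDual
    (eq_of_nhds_neBot ((hf.continuousAt_comp hφ.continuousAt).clusterPt.mono hlim))

section Projections

variable {𝕜 X Γ : Type*} [NontriviallyNormedField 𝕜] [NormedAddCommGroup X] [NormedSpace 𝕜 X]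
  {P : Γ → X →L[𝕜] X}

theorem comp_eq_zero_of_comp_eq_self (hdisj : ∀ α β, α ≠ β → (P α).comp (P β) = 0)
    {g : StrongDual 𝕜 X} {α β : Γ} (hg : g.comp (P α) = g) (hαβ : α ≠ β) :
    g.comp (P β) = 0 := by
  rw [← hg, ContinuousLinearMap.comp_assoc, hdisj α β hαβ, ContinuousLinearMap.comp_zero]

theorem sum_comp_eq_of_mem (hdisj : ∀ α β, α ≠ β → (P α).comp (P β) = 0)
    {κ : Type*} {γ : κ → Γ} (hγ : Function.Injective γ) {g : κ → StrongDual 𝕜 X}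
    (hg : ∀ i, (g i).comp (P (γ i)) = g i) {s : Finset κ} {i : κ} (hi : i ∈ s) :
    (∑ j ∈ s, g j).comp (P (γ i)) = g i := by
  rw [ContinuousLinearMap.finsetSum_comp, Finset.sum_eq_single_of_mem i hi
    fun j _ hji => comp_eq_zero_of_comp_eq_self hdisj (hg j) (hγ.ne hji), hg i]

theorem finite_setOf_comp_ne_zero_of_mem_span (hdisj : ∀ α β, α ≠ β → (P α).comp (P β) = 0)
    {h : StrongDual 𝕜 X}
    (hh : h ∈ Submodule.span 𝕜 (⋃ γ, Set.range fun f : StrongDual 𝕜 X => f.comp (P γ))) :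
    {β | h.comp (P β) ≠ 0}.Finite := by
  induction hh using Submodule.span_induction with
  | mem _ hx =>
    obtain ⟨γ, f, rfl⟩ := Set.mem_iUnion.mp hx
    refine (Set.finite_singleton γ).subset fun β hβ => ?_
    by_contra hβγ
    exact hβ (by rw [ContinuousLinearMap.comp_assoc, hdisj γ β (Ne.symm hβγ),
      ContinuousLinearMap.comp_zero])
  | zero => simp
  | add x y _ _ hx hy =>
    refine (hx.union hy).subset fun β hβ => ?_
    simp only [Set.mem_union, Set.mem_ofPred_eq] at hβ ⊢
    contrapose! hβ
    rw [ContinuousLinearMap.add_comp, hβ.1, hβ.2, add_zero]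
  | smul a x _ hx =>
    refine hx.subset fun β hβ => ?_
    simp only [Set.mem_ofPred_eq] at hβ ⊢
    contrapose! hβ
    rw [ContinuousLinearMap.smul_comp, hβ]
    -- `smul_zero` cannot see through `StrongDual` to find the type of this `0`
    exact smul_zero (A := X →L[𝕜] 𝕜) a

theorem tendsto_comp_cofinite_nhds_zero (hdisj : ∀ α β, α ≠ β → (P α).comp (P β) = 0)
    {C : ℝ} (hC : ∀ γ, ‖P γ‖ ≤ C)
    (hspan_dual : (Submodule.span 𝕜
        (⋃ γ, Set.range fun f : StrongDual 𝕜 X => f.comp (P γ))).topologicalClosure = ⊤)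
    (f : StrongDual 𝕜 X) :
    Tendsto (fun γ => f.comp (P γ)) cofinite (𝓝 0) := by
  refine Metric.tendsto_nhds.mpr fun ε hε => ?_
  have hf : f ∈ closure (Submodule.span 𝕜
      (⋃ γ, Set.range fun f : StrongDual 𝕜 X => f.comp (P γ)) : Set (StrongDual 𝕜 X)) := by
    rw [← Submodule.topologicalClosure_coe, hspan_dual]
    trivial
  obtain ⟨h, hh, hfh⟩ := Metric.mem_closure_iff.mp hf (ε / (|C| + 1)) (by positivity)
  filter_upwards [(finite_setOf_comp_ne_zero_of_mem_span hdisj hh).eventually_cofinite_notMem]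
    with γ hγ
  have hhγ : h.comp (P γ) = 0 := not_not.mp hγ
  rw [dist_zero_right, ← sub_zero (f.comp (P γ)), ← hhγ, ← ContinuousLinearMap.sub_comp]
  calc ‖(f - h).comp (P γ)‖ ≤ ‖f - h‖ * ‖P γ‖ := ContinuousLinearMap.opNorm_comp_le _ _
    _ ≤ ‖f - h‖ * (|C| + 1) := by gcongr; linarith [hC γ, le_abs_self C]
    _ < ε := by rwa [← dist_eq_norm, ← lt_div_iff₀ (by positivity)]

theorem exists_lt_norm_sum_range [ProperSpace 𝕜] (hdisj : ∀ α β, α ≠ β → (P α).comp (P β) = 0)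
    {C : ℝ} (hC : ∀ γ, ‖P γ‖ ≤ C)
    (hspan_dual : (Submodule.span 𝕜
        (⋃ γ, Set.range fun f : StrongDual 𝕜 X => f.comp (P γ))).topologicalClosure = ⊤)
    {γ : ℕ → Γ} (hγ : Function.Injective γ) {g : ℕ → StrongDual 𝕜 X}
    (hg : ∀ i, (g i).comp (P (γ i)) = g i) (hg₁ : ∀ i, ‖g i‖ = 1) (M : ℝ) :
    ∃ n, M < ‖∑ i ∈ Finset.range n, g i‖ := by
  by_contra! hM
  obtain ⟨f, hf⟩ := StrongDual.exists_comp_eq_of_norm_le (fun i => P (γ i)) hM g fun i =>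
    (eventually_gt_atTop i).mono fun n hn =>
      sum_comp_eq_of_mem hdisj hγ hg (Finset.mem_range.mpr hn)
  have hlim : Tendsto g atTop (𝓝 0) := by
    rw [← Nat.cofinite_eq_atTop]
    exact ((tendsto_comp_cofinite_nhds_zero hdisj hC hspan_dual f).comp
      hγ.tendsto_cofinite).congr hf
  simpa [hg₁] using hlim.norm

end Projections

theorem eventually_mem_of_mem_iUnion_iInter {ι α : Type*} [Preorder ι] {F : ι → Set α} {a : α}
    (ha : a ∈ ⋃ i, ⋂ (j : ι) (_ : i ≤ j), F j) : ∀ᶠ j in atTop, a ∈ F j := by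
  obtain ⟨i, hi⟩ := Set.mem_iUnion.mp ha
  exact (eventually_ge_atTop i).mono fun j hj => Set.mem_iInter₂.mp hi j hj

section Rho

variable {X Γ : Type*} [NormedAddCommGroup X] [NormedSpace ℝ X] {P : Γ → X →L[ℝ] X}

theorem ofReal_norm_sum_le_rho {A : Set Γ} {S : Finset Γ} (hS : ↑S ⊆ A) {f : StrongDual ℝ X}
    (hf : ∀ γ ∈ S, ‖Pstar P γ f‖ ≤ 1) :
    ENNReal.ofReal ‖∑ γ ∈ S, Pstar P γ f‖ ≤ rho P A :=
  le_iSup₂_of_le S hS <| le_iSup₂_of_le f hf le_rfl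

theorem ofReal_norm_sum_le_rho_of_comp_eq (hdisj : ∀ α β, α ≠ β → (P α).comp (P β) = 0)
    {κ : Type*} {γ : κ → Γ} (hγ : Function.Injective γ) {g : κ → StrongDual ℝ X}
    (hg : ∀ i, (g i).comp (P (γ i)) = g i) (hg₁ : ∀ i, ‖g i‖ ≤ 1) {s : Finset κ} {A : Set Γ}
    (hs : γ '' s ⊆ A) :
    ENNReal.ofReal ‖∑ i ∈ s, g i‖ ≤ rho P A := by
  classical
  have hcomp : ∀ i ∈ s, Pstar P (γ i) (∑ j ∈ s, g j) = g i := fun i hi =>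
    sum_comp_eq_of_mem hdisj hγ hg hi
  have hsum : ∑ β ∈ s.image γ, Pstar P β (∑ j ∈ s, g j) = ∑ i ∈ s, g i := by
    rw [Finset.sum_image hγ.injOn]
    exact Finset.sum_congr rfl hcomp
  rw [← hsum]
  refine ofReal_norm_sum_le_rho (by simpa using hs) ?_
  exact Finset.forall_mem_image.mpr fun i hi => (hcomp i hi).symm ▸ hg₁ i

end Rho

theorem rho_tendsto_top_of_liminf_infinite_general
    {X : Type*} [NormedAddCommGroup X] [NormedSpace ℝ X]
    {Γ : Type*} (P : Γ → X →L[ℝ] X)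
    (hproj : ∀ γ, (P γ).comp (P γ) = P γ)
    (hne : ∀ γ, P γ ≠ 0)
    (hdisj : ∀ α β, α ≠ β → (P α).comp (P β) = 0)
    (hbdd : ∃ C : ℝ, ∀ γ, ‖P γ‖ ≤ C)
    (hspan_dual : (Submodule.span ℝ
        (⋃ γ, Set.range (fun f : StrongDual ℝ X => f.comp (P γ)))).topologicalClosure = ⊤)
    {ι : Type*} [Preorder ι]
    (F : ι → Finset Γ)
    (hinf : (⋃ α : ι, ⋂ (β : ι) (_ : α ≤ β), (F β : Set Γ)).Infinite) :
    Tendsto (fun α : ι => rho P (F α : Set Γ)) atTop (nhds ⊤) := by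
  obtain ⟨C, hC⟩ := hbdd
  let γ : ℕ → Γ := fun i => hinf.natEmbedding _ i
  have hγ : Function.Injective γ := Subtype.val_injective.comp (hinf.natEmbedding _).injective
  choose g hg hg₁ using fun i => StrongDual.exists_norm_eq_one_comp_eq_self (hproj (γ i)) (hne _)
  refine ENNReal.tendsto_nhds_top_iff_nnreal.mpr fun M => ?_
  obtain ⟨n, hn⟩ := exists_lt_norm_sum_range hdisj hC hspan_dual hγ hg hg₁ M
  have hsub : ∀ᶠ α in atTop, γ '' ↑(Finset.range n) ⊆ (F α : Set Γ) := by
    simpa [Set.image_subset_iff, Set.subset_def] using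
      (Finset.range n).eventually_all.mpr fun i _ =>
        eventually_mem_of_mem_iUnion_iInter (hinf.natEmbedding _ i).2
  filter_upwards [hsub] with α hα
  calc (M : ℝ≥0∞) < ENNReal.ofReal ‖∑ i ∈ Finset.range n, g i‖ :=
        (ENNReal.lt_ofReal_iff_toReal_lt ENNReal.coe_ne_top).mpr hn
    _ ≤ rho P (F α : Set Γ) :=
        ofReal_norm_sum_le_rho_of_comp_eq hdisj hγ hg (fun i => (hg₁ i).le) hα

/-- If `(F^α)` is a net of finite subsets of `Γ` whose lower limit
`⋃_α ⋂_{β ≥ α} F^β` is infinite, then `ρ(F^α) → ∞`.  Here `X` carries a system of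
non-zero, pairwise disjoint, uniformly bounded projections whose ranges densely span `X`
and whose adjoint ranges densely span `X*`. -/
theorem rho_tendsto_top_of_liminf_infinite
    {X : Type*} [NormedAddCommGroup X] [NormedSpace ℝ X] [CompleteSpace X]
    {Γ : Type*} (P : Γ → X →L[ℝ] X)
    (hproj : ∀ γ, (P γ).comp (P γ) = P γ)
    (hne : ∀ γ, P γ ≠ 0)
    (hdisj : ∀ α β, α ≠ β → (P α).comp (P β) = 0)
    (hbdd : ∃ C : ℝ, ∀ γ, ‖P γ‖ ≤ C)
    (hspanX : (Submodule.span ℝ (⋃ γ, Set.range (P γ))).topologicalClosure = ⊤)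
    (hspan_dual : (Submodule.span ℝ
        (⋃ γ, Set.range (fun f : StrongDual ℝ X => f.comp (P γ)))).topologicalClosure = ⊤)
    {ι : Type*} [Preorder ι] [Nonempty ι] [IsDirected ι (· ≤ ·)]
    (F : ι → Finset Γ)
    (hinf : (⋃ α : ι, ⋂ (β : ι) (_ : α ≤ β), (F β : Set Γ)).Infinite) :
    Tendsto (fun α : ι => rho P (F α : Set Γ)) atTop (nhds ⊤) :=
  rho_tendsto_top_of_liminf_infinite_general P hproj hne hdisj hbdd hspan_dual F hinf
end

section
/- Let $X$ be a Banach space with a system of projections $(P_\gamma)_{\gamma\in\Gamma}$ as above, and define for $f\in X^*$: $p_k(f)$ the $k$-th largest element of $\{\|P_\gamma^* f\| : P_\gamma^* f \neq 0\}$ (or $0$ if there are fewer than $k$ distinct values), $q_k(f) = p_k(f)-p_{k+1}(f)$, $G_k(f) = \{\gamma : \|P_\gamma^* f\| \ge p_k(f), P_\gamma^* f \neq 0\}$, and $\theta(f) = \sum_{k=1}^\infty q_k(f)\rho(G_k(f))$. Then $\theta$ is weak*-lower semicontinuous on $X^*$. -/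
open Filter
open scoped ENNReal NNReal

/-!
Layer-cake formula: on `[p_{k+1}(f), p_k(f))` the level set `{γ : s < ‖P_γ* f‖}` is `G_k(f)`,
so `θ(f) = ∫_{s > 0} ρ({γ : s < ‖P_γ* f‖}) ds`. This needs `p_k(f) → 0`: by disjointness, the
functionals in the span of the `P_γ*`-ranges have finitely many non-zero components, and
approximating `f` by them shows that only finitely many components of `f` are large.
For fixed `s`, `f ↦ ρ({γ : s < ‖P_γ* f‖})` is a supremum over finite `S ⊆ Γ` of constants on the
weak*-open sets `{f : S ⊆ {γ : s < ‖P_γ* f‖}}`, hence weak*-lower semicontinuous. Finally the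
integral of an antitone function is the supremum over `a > 0` of its right-endpoint sums
`∑ a h((j+1)a)`, and these are countable sums of lower semicontinuous functions.
-/

open Set MeasureTheory
open scoped Function

lemma IsOpen.lowerSemicontinuous_iSup_const {α δ : Type*} [TopologicalSpace α]
    [CompleteLinearOrder δ] {p : α → Prop} (hp : IsOpen {x | p x}) (c : δ) :
    LowerSemicontinuous fun x => ⨆ (_ : p x), c := by
  intro x y hy
  have hx : p x := by
    by_contra hx
    simp [hx] at hy
  filter_upwards [hp.mem_nhds hx] with x' hx'
  simpa [hx, hx'] using hy

lemma WeakDual.lowerSemicontinuous_norm_toStrongDual {𝕜 E : Type*} [NontriviallyNormedField 𝕜]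
    [SeminormedAddCommGroup E] [NormedSpace 𝕜 E] :
    LowerSemicontinuous fun f : WeakDual 𝕜 E => ‖toStrongDual f‖ :=
  lowerSemicontinuous_iff_isClosed_preimage.2 fun r => by
    simpa [Set.preimage] using WeakDual.isClosed_closedBall (0 : StrongDual 𝕜 E) r

lemma csSup_mem_of_finite_inter_Ioi {α : Type*} [ConditionallyCompleteLinearOrder α]
    {T : Set α} {s : α} (hT : BddAbove T) (hTne : T.Nonempty) (hfin : (T ∩ Ioi s).Finite)
    (hs : s < sSup T) : sSup T ∈ T := by
  obtain ⟨r, hrT, hsr⟩ := exists_lt_of_lt_csSup hTne hs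
  have hmem : sSup (T ∩ Ioi s) ∈ T ∩ Ioi s := Nonempty.csSup_mem ⟨r, hrT, hsr⟩ hfin
  have hsup : sSup T = sSup (T ∩ Ioi s) := by
    refine le_antisymm (csSup_le hTne fun x hx => ?_)
      (csSup_le_csSup hT ⟨r, hrT, hsr⟩ inter_subset_left)
    rcases le_or_gt x s with hxs | hxs
    · exact hxs.trans hmem.2.le
    · exact le_csSup hfin.bddAbove ⟨hx, hxs⟩
  exact hsup ▸ hmem.1

lemma iUnion_Ioc_nat_add_mul (c : ℝ) {a : ℝ} (ha : 0 < a) :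
    ⋃ j : ℕ, Ioc ((j + c) * a) ((j + 1 + c) * a) = Ioi (c * a) := by
  have hunbdd : ¬BddAbove (range fun j : ℕ => (j + c) * a) :=
    not_bddAbove_of_tendsto_atTop
      ((tendsto_natCast_atTop_atTop.atTop_add tendsto_const_nhds).atTop_mul_const ha)
  simpa [Order.succ_eq_add_one, add_right_comm] using
    iUnion_Ioc_map_succ_eq_Ioi (f := fun j : ℕ => (j + c) * a)
      (fun j => by gcongr; simp) hunbdd

namespace Antitone

variable {h : ℝ → ℝ≥0∞}

lemma ofReal_sub_mul_le_setLIntegral_Ioc (hh : Antitone h) (a b : ℝ) :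
    ENNReal.ofReal (b - a) * h b ≤ ∫⁻ s in Ioc a b, h s :=
  calc ENNReal.ofReal (b - a) * h b = ∫⁻ _ in Ioc a b, h b := by
        rw [setLIntegral_const, Real.volume_Ioc, mul_comm]
    _ ≤ ∫⁻ s in Ioc a b, h s := setLIntegral_mono' measurableSet_Ioc fun _ hs => hh hs.2

lemma setLIntegral_Ioc_le_ofReal_sub_mul (hh : Antitone h) (a b : ℝ) :
    ∫⁻ s in Ioc a b, h s ≤ ENNReal.ofReal (b - a) * h a :=
  calc ∫⁻ s in Ioc a b, h s ≤ ∫⁻ _ in Ioc a b, h a :=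
        setLIntegral_mono' measurableSet_Ioc fun _ hs => hh hs.1.le
    _ = ENNReal.ofReal (b - a) * h a := by rw [setLIntegral_const, Real.volume_Ioc, mul_comm]

lemma tsum_le_setLIntegral_Ioi_zero (hh : Antitone h) {a : ℝ} (ha : 0 < a) :
    ∑' j : ℕ, ENNReal.ofReal a * h ((j + 1) * a) ≤ ∫⁻ s in Ioi 0, h s := by
  have hdisj : Pairwise (Disjoint on fun j : ℕ => Ioc ((j + 0) * a) ((j + 1 + 0) * a)) := by
    have hmono : Monotone fun j : ℕ => (j : ℝ) * a := Nat.mono_cast.mul_const ha.le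
    simpa [Order.succ_eq_add_one] using hmono.pairwise_disjoint_on_Ioc_succ
  calc ∑' j : ℕ, ENNReal.ofReal a * h ((j + 1) * a)
      ≤ ∑' j : ℕ, ∫⁻ s in Ioc ((j + 0) * a) ((j + 1 + 0) * a), h s :=
        ENNReal.tsum_le_tsum fun j => by
          simpa [← sub_mul] using hh.ofReal_sub_mul_le_setLIntegral_Ioc (j * a) ((j + 1) * a)
    _ = ∫⁻ s in Ioi 0, h s := by
        rw [← lintegral_iUnion (fun _ => measurableSet_Ioc) hdisj, iUnion_Ioc_nat_add_mul 0 ha,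
          zero_mul]

lemma setLIntegral_Ioi_le_tsum (hh : Antitone h) {a : ℝ} (ha : 0 < a) :
    ∫⁻ s in Ioi a, h s ≤ ∑' j : ℕ, ENNReal.ofReal a * h ((j + 1) * a) :=
  calc ∫⁻ s in Ioi a, h s = ∫⁻ s in ⋃ j : ℕ, Ioc ((j + 1) * a) ((j + 1 + 1) * a), h s := by
        rw [iUnion_Ioc_nat_add_mul 1 ha, one_mul]
    _ ≤ ∑' j : ℕ, ∫⁻ s in Ioc ((j + 1) * a) ((j + 1 + 1) * a), h s := lintegral_iUnion_le _ _
    _ ≤ ∑' j : ℕ, ENNReal.ofReal a * h ((j + 1) * a) :=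
        ENNReal.tsum_le_tsum fun j => by
          simpa [← sub_mul] using
            hh.setLIntegral_Ioc_le_ofReal_sub_mul ((j + 1) * a) ((j + 1 + 1) * a)

theorem setLIntegral_Ioi_zero_eq_iSup_tsum (hh : Antitone h) :
    ∫⁻ s in Ioi 0, h s = ⨆ (a : ℝ) (_ : 0 < a), ∑' j : ℕ, ENNReal.ofReal a * h ((j + 1) * a) := by
  refine le_antisymm ?_ (iSup₂_le fun a ha => hh.tsum_le_setLIntegral_Ioi_zero ha)
  have hU : Ioi (0 : ℝ) = ⋃ n : ℕ, Ioi (1 / (n + 1 : ℝ)) := by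
    ext s
    simp only [mem_Ioi, mem_iUnion]
    exact ⟨fun hs => exists_nat_one_div_lt hs, fun ⟨n, hn⟩ => lt_trans (by positivity) hn⟩
  have hmono : Monotone fun n : ℕ => Ioi (1 / (n + 1 : ℝ)) := fun m n hmn =>
    Ioi_subset_Ioi (by gcongr)
  rw [hU, setLIntegral_iUnion_of_directed _ hmono.directed_le]
  exact iSup_le fun n =>
    le_iSup₂_of_le (1 / (n + 1 : ℝ)) (by positivity) (hh.setLIntegral_Ioi_le_tsum (by positivity))

end Antitone

section

variable {X : Type*} [NormedAddCommGroup X] [NormedSpace ℝ X] {Γ : Type*} (P : Γ → X →L[ℝ] X)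

def levelSet (f : StrongDual ℝ X) (s : ℝ) : Set Γ :=
  {γ | s < ‖Pstar P γ f‖}

lemma norm_Pstar_le (γ : Γ) (f : StrongDual ℝ X) : ‖Pstar P γ f‖ ≤ ‖f‖ * ‖P γ‖ :=
  ContinuousLinearMap.opNorm_comp_le _ _

lemma bddAbove_ranSet {C : ℝ} (hC : ∀ γ, ‖P γ‖ ≤ C) (f : StrongDual ℝ X) :
    BddAbove (ranSet P f) :=
  ⟨‖f‖ * C, by
    rintro _ ⟨γ, -, rfl⟩
    exact (norm_Pstar_le P γ f).trans (mul_le_mul_of_nonneg_left (hC γ) (norm_nonneg f))⟩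

lemma finite_support_Pstar_of_mem_span (hdisj : ∀ α β, α ≠ β → (P α).comp (P β) = 0)
    {g : StrongDual ℝ X}
    (hg : g ∈ Submodule.span ℝ (⋃ γ, range fun f : StrongDual ℝ X => f.comp (P γ))) :
    (Function.support fun γ => Pstar P γ g).Finite := by
  induction hg using Submodule.span_induction with
  | mem x hx =>
    obtain ⟨α, h, rfl⟩ := mem_iUnion.1 hx
    refine (finite_singleton α).subset fun γ hγ => ?_
    by_contra hne
    exact hγ (by simp [Pstar, ContinuousLinearMap.comp_assoc, hdisj α γ (Ne.symm hne)])
  | zero => simp [Pstar]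
  | add x y _ _ hx hy =>
    refine (hx.union hy).subset ?_
    simpa only [Pstar, ContinuousLinearMap.add_comp] using
      Function.support_add (fun γ => Pstar P γ x) (fun γ => Pstar P γ y)
  | smul c x _ hx =>
    refine hx.subset fun γ hγ h0 => hγ ?_
    simp only [Pstar, ContinuousLinearMap.smul_comp] at h0 ⊢
    rw [h0, smul_zero]

lemma finite_setOf_le_norm_Pstar (hdisj : ∀ α β, α ≠ β → (P α).comp (P β) = 0)
    {C : ℝ} (hC : ∀ γ, ‖P γ‖ ≤ C)
    (hspan_dual : (Submodule.span ℝ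
        (⋃ γ, range fun f : StrongDual ℝ X => f.comp (P γ))).topologicalClosure = ⊤)
    (f : StrongDual ℝ X) {ε : ℝ} (hε : 0 < ε) : {γ | ε ≤ ‖Pstar P γ f‖}.Finite := by
  have hC' : 0 < max C 1 := zero_lt_one.trans_le (le_max_right C 1)
  obtain ⟨g, hg, hfg⟩ := (Submodule.dense_iff_topologicalClosure_eq_top.2 hspan_dual).exists_dist_lt
    f (div_pos hε hC')
  refine (finite_support_Pstar_of_mem_span P hdisj hg).subset
    fun γ (hγ : ε ≤ _) (hg0 : Pstar P γ g = 0) => not_lt.2 hγ ?_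
  calc ‖Pstar P γ f‖ = ‖Pstar P γ (f - g)‖ := by
        simp only [Pstar, ContinuousLinearMap.sub_comp] at hg0 ⊢
        rw [hg0, sub_zero]
    _ ≤ ‖f - g‖ * max C 1 := (norm_Pstar_le P γ _).trans
        (mul_le_mul_of_nonneg_left ((hC γ).trans (le_max_left C 1)) (norm_nonneg _))
    _ < ε / max C 1 * max C 1 := by gcongr; rwa [← dist_eq_norm]
    _ = ε := div_mul_cancel₀ ε hC'.ne'

section Pfun

variable (f : StrongDual ℝ X)

lemma pfun_nonneg : ∀ k, 0 ≤ pfun P f k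
  | 0 => le_rfl
  | 1 => Real.sSup_nonneg fun _ ⟨_, _, hr⟩ => hr ▸ norm_nonneg _
  | _ + 2 => Real.sSup_nonneg fun _ ⟨⟨_, _, hr⟩, _⟩ => hr ▸ norm_nonneg _

lemma pfun_add_two_le (k : ℕ) : pfun P f (k + 2) ≤ pfun P f (k + 1) := by
  rcases eq_empty_or_nonempty {r | r ∈ ranSet P f ∧ r < pfun P f (k + 1)} with hT | hT
  · simp only [pfun, hT, Real.sSup_empty]
    exact pfun_nonneg P f (k + 1)
  · exact csSup_le hT fun _ hr => hr.2.le

lemma antitone_pfun_succ : Antitone fun k => pfun P f (k + 1) :=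
  antitone_nat_of_succ_le (pfun_add_two_le P f)

lemma exists_pfun_succ_le (hb : BddAbove (ranSet P f)) {s : ℝ} (hs : 0 < s)
    (hfin : {γ | s ≤ ‖Pstar P γ f‖}.Finite) : ∃ k, pfun P f (k + 1) ≤ s := by
  by_contra! hlt
  have hF : (ranSet P f ∩ Ioi s).Finite :=
    (hfin.image fun γ => ‖Pstar P γ f‖).subset fun r ⟨⟨γ, _, hr⟩, hsr⟩ =>
      ⟨γ, show s ≤ _ from hr ▸ hsr.le, hr⟩
  have hmem : ∀ T ⊆ ranSet P f, s < sSup T → sSup T ∈ T := fun T hT hsT =>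
    csSup_mem_of_finite_inter_Ioi (hb.mono hT)
      (nonempty_iff_ne_empty.2 fun h => by rw [h, Real.sSup_empty] at hsT; linarith)
      (hF.subset (inter_subset_inter_left _ hT)) hsT
  have hstep : ∀ k, pfun P f (k + 2) ∈ {r | r ∈ ranSet P f ∧ r < pfun P f (k + 1)} :=
    fun k => hmem _ (fun _ hr => hr.1) (hlt (k + 1))
  have hrange : range (fun k => pfun P f (k + 1)) ⊆ ranSet P f ∩ Ioi s := by
    rintro _ ⟨_ | k, rfl⟩
    exacts [⟨hmem _ subset_rfl (hlt 0), hlt 0⟩, ⟨(hstep k).1, hlt (k + 1)⟩]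
  exact infinite_range_of_injective
    (strictAnti_nat_of_succ_lt fun k => (hstep k).2).injective (hF.subset hrange)

lemma levelSet_eq_empty (hb : BddAbove (ranSet P f)) {s : ℝ} (hs : pfun P f 1 ≤ s) :
    levelSet P f s = ∅ :=
  eq_empty_of_forall_notMem fun γ (hγ : s < ‖Pstar P γ f‖) =>
    have hne : Pstar P γ f ≠ 0 :=
      norm_pos_iff.1 ((pfun_nonneg P f 1).trans hs |>.trans_lt hγ)
    not_lt.2 (le_csSup hb ⟨γ, hne, rfl⟩) (hs.trans_lt hγ)

lemma levelSet_eq_Gset (hb : BddAbove (ranSet P f)) {k : ℕ} {s : ℝ}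
    (hs : s ∈ Ico (pfun P f (k + 2)) (pfun P f (k + 1))) :
    levelSet P f s = Gset P f (k + 1) := by
  ext γ
  refine ⟨fun (hγ : s < ‖Pstar P γ f‖) => ?_, fun hγ => hs.2.trans_le hγ.2⟩
  have hne : Pstar P γ f ≠ 0 :=
    norm_pos_iff.1 (((pfun_nonneg P f _).trans hs.1).trans_lt hγ)
  refine ⟨hne, not_lt.1 fun hlt => ?_⟩
  have : ‖Pstar P γ f‖ ≤ pfun P f (k + 2) :=
    le_csSup (hb.mono fun _ hr => hr.1) ⟨⟨γ, hne, rfl⟩, hlt⟩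
  linarith [hs.1]

lemma Ioi_subset_Ici_union_iUnion_Ico (hb : BddAbove (ranSet P f))
    (hfin : ∀ s > 0, {γ | s ≤ ‖Pstar P γ f‖}.Finite) :
    Ioi 0 ⊆ Ici (pfun P f 1) ∪ ⋃ k, Ico (pfun P f (k + 2)) (pfun P f (k + 1)) := by
  classical
  intro s (hs : 0 < s)
  by_cases h1 : pfun P f 1 ≤ s
  · exact Or.inl h1
  have hex := exists_pfun_succ_le P f hb hs (hfin s hs)
  obtain ⟨k, hk⟩ : ∃ k, Nat.find hex = k + 1 :=
    Nat.exists_eq_succ_of_ne_zero fun h0 => h1 (by simpa [h0] using Nat.find_spec hex)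
  refine Or.inr (mem_iUnion.2 ⟨k, ?_, not_le.1 (Nat.find_min hex (by omega))⟩)
  simpa [hk] using Nat.find_spec hex

end Pfun

lemma rho_mono {A B : Set Γ} (h : A ⊆ B) : rho P A ≤ rho P B :=
  iSup_mono fun _ => iSup_le fun hS => le_iSup_of_le (hS.trans h) le_rfl

lemma rho_empty : rho P (∅ : Set Γ) = 0 := by
  simp [rho, -ofReal_norm]

lemma antitone_rho_levelSet (f : StrongDual ℝ X) :
    Antitone fun s => rho P (levelSet P f s) :=
  fun _ _ hab => rho_mono P fun _ hγ => hab.trans_lt hγ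

theorem theta_eq_setLIntegral_rho_levelSet (f : StrongDual ℝ X) (hb : BddAbove (ranSet P f))
    (hfin : ∀ s > 0, {γ | s ≤ ‖Pstar P γ f‖}.Finite) :
    theta P f = ∫⁻ s in Ioi 0, rho P (levelSet P f s) := by
  set I : ℕ → Set ℝ := fun k => Ico (pfun P f (k + 2)) (pfun P f (k + 1))
  have hI : theta P f = ∫⁻ s in ⋃ k, I k, rho P (levelSet P f s) := by
    rw [lintegral_iUnion (fun _ => measurableSet_Ico)
      (by simpa using (antitone_pfun_succ P f).pairwise_disjoint_on_Ico_succ)]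
    refine tsum_congr fun k => ?_
    rw [setLIntegral_congr_fun measurableSet_Ico fun s hs => by rw [levelSet_eq_Gset P f hb hs],
      setLIntegral_const, Real.volume_Ico, mul_comm]
    rfl
  have hI_nonneg : ⋃ k, I k ⊆ Ici 0 :=
    iUnion_subset fun k s hs => (pfun_nonneg P f (k + 2)).trans hs.1
  refine le_antisymm ?_ ?_
  · rw [hI]
    exact lintegral_mono_set' (hI_nonneg.eventuallyLE.trans Ioi_ae_eq_Ici.symm.le)
  · calc ∫⁻ s in Ioi 0, rho P (levelSet P f s)
        ≤ ∫⁻ s in Ici (pfun P f 1) ∪ ⋃ k, I k, rho P (levelSet P f s) :=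
          lintegral_mono_set (Ioi_subset_Ici_union_iUnion_Ico P f hb hfin)
      _ ≤ (∫⁻ s in Ici (pfun P f 1), rho P (levelSet P f s)) +
            ∫⁻ s in ⋃ k, I k, rho P (levelSet P f s) := lintegral_union_le _ _ _
      _ = theta P f := by
          rw [setLIntegral_eq_zero measurableSet_Ici fun s hs => by
            simp [levelSet_eq_empty P f hb hs, rho_empty], zero_add, hI]

lemma lowerSemicontinuous_norm_Pstar (γ : Γ) :
    LowerSemicontinuous fun f : WeakDual ℝ X => ‖Pstar P γ (WeakDual.toStrongDual f)‖ :=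
  WeakDual.lowerSemicontinuous_norm_toStrongDual.comp
    (g := fun f : WeakDual ℝ X => StrongDual.toWeakDual (Pstar P γ (WeakDual.toStrongDual f)))
    (WeakDual.continuous_of_continuous_eval fun x => WeakDual.eval_continuous (P γ x))

lemma lowerSemicontinuous_rho_levelSet (s : ℝ) :
    LowerSemicontinuous fun f : WeakDual ℝ X =>
      rho P (levelSet P (WeakDual.toStrongDual f) s) := by
  refine lowerSemicontinuous_iSup fun S => IsOpen.lowerSemicontinuous_iSup_const ?_ _
  have hS : {f : WeakDual ℝ X | ↑S ⊆ levelSet P (WeakDual.toStrongDual f) s} =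
      ⋂ γ ∈ S, {f | s < ‖Pstar P γ (WeakDual.toStrongDual f)‖} := by
    ext f
    simp [levelSet, Set.subset_def]
  rw [hS]
  exact isOpen_biInter_finset fun γ _ => (lowerSemicontinuous_norm_Pstar P γ).isOpen_preimage s

end

theorem theta_weakStar_lowerSemicontinuous_general
    {X : Type*} [NormedAddCommGroup X] [NormedSpace ℝ X]
    {Γ : Type*} (P : Γ → X →L[ℝ] X)
    (hdisj : ∀ α β, α ≠ β → (P α).comp (P β) = 0)
    (hbdd : ∃ C : ℝ, ∀ γ, ‖P γ‖ ≤ C)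
    (hspan_dual : (Submodule.span ℝ
        (⋃ γ, Set.range (fun f : StrongDual ℝ X => f.comp (P γ)))).topologicalClosure = ⊤) :
    LowerSemicontinuous (fun f : WeakDual ℝ X => theta P (WeakDual.toStrongDual f)) := by
  obtain ⟨C, hC⟩ := hbdd
  have hθ : ∀ f : StrongDual ℝ X, theta P f =
      ⨆ (a : ℝ) (_ : 0 < a), ∑' j : ℕ, ENNReal.ofReal a * rho P (levelSet P f ((j + 1) * a)) :=
    fun f => by
      rw [theta_eq_setLIntegral_rho_levelSet P f (bddAbove_ranSet P hC f)
        fun s hs => finite_setOf_le_norm_Pstar P hdisj hC hspan_dual f hs]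
      exact (antitone_rho_levelSet P f).setLIntegral_Ioi_zero_eq_iSup_tsum
  simp only [hθ]
  refine lowerSemicontinuous_biSup fun a _ => lowerSemicontinuous_tsum fun j => ?_
  exact (ENNReal.continuous_const_mul ENNReal.ofReal_ne_top).comp_lowerSemicontinuous
    (lowerSemicontinuous_rho_levelSet P _) fun _ _ h => mul_le_mul_right h _

/-- The function `θ(f) = ∑_{k≥1} q_k(f) ρ(G_k(f))` is weak*-lower semicontinuous on `X*`,
for any system of non-zero, pairwise disjoint, uniformly bounded projections whose ranges
densely span `X` and whose adjoint ranges densely span `X*`. -/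
theorem theta_weakStar_lowerSemicontinuous
    {X : Type*} [NormedAddCommGroup X] [NormedSpace ℝ X] [CompleteSpace X]
    {Γ : Type*} (P : Γ → X →L[ℝ] X)
    (hproj : ∀ γ, (P γ).comp (P γ) = P γ)
    (hne : ∀ γ, P γ ≠ 0)
    (hdisj : ∀ α β, α ≠ β → (P α).comp (P β) = 0)
    (hbdd : ∃ C : ℝ, ∀ γ, ‖P γ‖ ≤ C)
    (hspanX : (Submodule.span ℝ (⋃ γ, Set.range (P γ))).topologicalClosure = ⊤)
    (hspan_dual : (Submodule.span ℝ
        (⋃ γ, Set.range (fun f : StrongDual ℝ X => f.comp (P γ)))).topologicalClosure = ⊤) :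
    LowerSemicontinuous (fun f : WeakDual ℝ X => theta P (WeakDual.toStrongDual f)) :=
  theta_weakStar_lowerSemicontinuous_general P hdisj hbdd hspan_dual
end

section
/- Let $X$ be a Banach space with a normalized symmetric basis $(e_\gamma)_{\gamma\in\Gamma}$ and set $\lambda(n) = \|\sum_{k=1}^n e_{\gamma_k}\|_s$ for a fixed sequence of distinct indices. If there exists a set $\Delta$ and a bounded-below bounded linear map $T: X \to c_0(\Delta)$, then the sequence $(\lambda(n))_{n=1}^\infty$ is bounded. -/
/-!
The vectors `y k = T (e (g k))` form a bounded sequence in `c₀(Δ)`. A gliding hump picks indices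
`s 0 < s 1 < ⋯` such that each new pair difference `y (s (2i)) - y (s (2i+1))` is small on the
finite set where the earlier differences are large; then every point carries at most one large hump
and the alternating sums `∑ (-1)ᵏ y (s k)` are bounded by `3‖T‖ + 1`. By symmetry of the basis,
`λ(n)` is the symmetrized norm of `∑_{k<n} (-1)ᵏ e (g (s k))`, a vector whose image under `T` is
bounded; as `T` is bounded below, so is `λ(n)`.
-/

open Filter Topology Finset ZeroAtInfty

theorem exists_lt_dist_lt_of_isBounded_range {E : Type*} [PseudoMetricSpace E] [ProperSpace E]
    {v : ℕ → E} (hv : Bornology.IsBounded (Set.range v)) (N : ℕ) {η : ℝ} (hη : 0 < η) :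
    ∃ p q, N < p ∧ p < q ∧ dist (v p) (v q) < η := by
  obtain ⟨_, -, φ, hφ, hlim⟩ := tendsto_subseq_of_bounded hv fun k => Set.mem_range_self k
  obtain ⟨m, hm⟩ := Metric.cauchySeq_iff.mp hlim.cauchySeq η hη
  set i := max m (N + 1)
  refine ⟨φ i, φ (i + 1), ?_, hφ (Nat.lt_succ_self i), hm i (le_max_left _ _) (i + 1) ?_⟩
  · exact (Nat.lt_succ_self N).trans_le ((le_max_right m (N + 1)).trans (hφ.id_le i))
  · exact (le_max_left _ _).trans (Nat.le_succ i)

theorem StrictMono.exists_extend {s : ℕ → ℕ} (hs : StrictMono s) {n p : ℕ}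
    (hp : ∀ k < n, s k < p) : ∃ s' : ℕ → ℕ, StrictMono s' ∧ (∀ k < n, s' k = s k) ∧ s' n = p := by
  refine ⟨fun k => if k < n then s k else p + (k - n), strictMono_nat_of_lt_succ fun k => ?_,
    fun k hk => if_pos hk, by simp⟩
  by_cases hk : k + 1 < n
  · simp only [hk, (Nat.lt_succ_self k).trans hk, if_true]; exact hs (Nat.lt_succ_self k)
  by_cases hk' : k < n
  · simp only [hk, hk', if_true, if_false]; exact (hp k hk').trans_le (Nat.le_add_right _ _)
  · simp only [hk, hk', if_false]; omega

namespace ZeroAtInftyContinuousMap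

variable {α β : Type*} [TopologicalSpace α] [SeminormedAddCommGroup β]

theorem norm_coe_le_norm (f : C₀(α, β)) (x : α) : ‖f x‖ ≤ ‖f‖ :=
  norm_toBCF_eq_norm (f := f) ▸ f.toBCF.norm_coe_le_norm x

theorem norm_le {f : C₀(α, β)} {C : ℝ} (hC : 0 ≤ C) : ‖f‖ ≤ C ↔ ∀ x, ‖f x‖ ≤ C :=
  norm_toBCF_eq_norm (f := f) ▸ BoundedContinuousFunction.norm_le hC

@[simp]
theorem coe_sum {ι : Type*} (s : Finset ι) (f : ι → C₀(α, β)) :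
    ⇑(∑ i ∈ s, f i) = ∑ i ∈ s, ⇑(f i) :=
  map_sum (⟨⟨fun f => ⇑f, coe_zero⟩, coe_add⟩ : C₀(α, β) →+ α → β) f s

end ZeroAtInftyContinuousMap

theorem exists_lt_lt_forall_mem_abs_sub_lt {Δ : Type*} (y : ℕ → Δ → ℝ) {M : ℝ}
    (hM : ∀ k δ, |y k δ| ≤ M) (G : Finset Δ) (N : ℕ) {η : ℝ} (hη : 0 < η) :
    ∃ p q, N < p ∧ p < q ∧ ∀ δ ∈ G, |y p δ - y q δ| < η := by
  have hbdd : Bornology.IsBounded (Set.range fun k (δ : G) => y k δ) := by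
    refine isBounded_iff_forall_norm_le.2 ⟨max M 0, ?_⟩
    rintro _ ⟨k, rfl⟩
    exact (pi_norm_le_iff_of_nonneg (le_max_right M 0)).2 fun δ =>
      (hM k δ).trans (le_max_left M 0)
  obtain ⟨p, q, hNp, hpq, hpq_close⟩ := exists_lt_dist_lt_of_isBounded_range hbdd N hη
  exact ⟨p, q, hNp, hpq, fun δ hδ => (dist_le_pi_dist _ _ ⟨δ, hδ⟩).trans_lt hpq_close⟩

-- `G` collects the points where an earlier pair difference is large; elsewhere every pair
-- contributes at most `η`.
open Classical in
theorem exists_strictMono_abs_alternating_sum_le_of_finset {Δ : Type*} (y : ℕ → Δ → ℝ)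
    (hy : ∀ k, Tendsto (y k) cofinite (𝓝 0)) {M : ℝ} (hM : ∀ k δ, |y k δ| ≤ M)
    {η : ℝ} (hη : 0 < η) (m : ℕ) :
    ∃ s : ℕ → ℕ, StrictMono s ∧ ∃ G : Finset Δ, ∀ δ,
      |∑ k ∈ range (2 * m), (-1) ^ k * y (s k) δ| ≤ (if δ ∈ G then 2 * M else 0) + m * η := by
  induction m with
  | zero => exact ⟨id, strictMono_id, ∅, fun δ => by simp⟩
  | succ m ih =>
    obtain ⟨s, hs, G, hG⟩ := ih
    obtain ⟨p, q, hp, hpq, hclose⟩ := exists_lt_lt_forall_mem_abs_sub_lt y hM G (s (2 * m)) hη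
    obtain ⟨s₁, hs₁, hs₁s, hs₁p⟩ := hs.exists_extend fun k hk => (hs hk).trans hp
    obtain ⟨s₂, hs₂, hs₂s₁, hs₂q⟩ := hs₁.exists_extend (n := 2 * m + 1) (p := q) fun k hk =>
      (hs₁.monotone (Nat.lt_succ_iff.1 hk)).trans_lt (hs₁p ▸ hpq)
    have hbig : {δ | η ≤ |y p δ - y q δ|}.Finite := by
      have hsmall := (((hy p).sub (hy q)).abs).eventually_lt_const (by simpa using hη)
      simpa using Filter.eventually_cofinite.1 hsmall
    refine ⟨s₂, hs₂, G ∪ hbig.toFinset, fun δ => ?_⟩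
    have hsum : ∑ k ∈ range (2 * (m + 1)), (-1) ^ k * y (s₂ k) δ =
        ∑ k ∈ range (2 * m), (-1) ^ k * y (s k) δ + (y p δ - y q δ) := by
      have hs₂s : ∀ k ∈ range (2 * m), s₂ k = s k := fun k hk => by
        rw [mem_range] at hk
        rw [hs₂s₁ k (Nat.lt_succ_of_lt hk), hs₁s k hk]
      rw [show 2 * (m + 1) = 2 * m + 1 + 1 by ring, sum_range_succ, sum_range_succ,
        sum_congr rfl fun k hk => by rw [hs₂s k hk], hs₂q, hs₂s₁ _ (Nat.lt_succ_self _), hs₁p,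
        pow_succ, (even_two_mul m).neg_one_pow]
      ring
    rw [hsum]
    refine (abs_add_le _ _).trans ?_
    have hSδ := hG δ
    push_cast
    by_cases hδG : δ ∈ G
    · simp only [hδG, if_true, mem_union, true_or] at hSδ ⊢
      linarith [hclose δ hδG]
    by_cases hδbig : η ≤ |y p δ - y q δ|
    · have hδ : δ ∈ G ∪ hbig.toFinset := mem_union_right _ (hbig.mem_toFinset.2 hδbig)
      simp only [hδG, hδ, if_true, if_false] at hSδ ⊢
      linarith [abs_sub (y p δ) (y q δ), hM p δ, hM q δ]
    · have hδ : δ ∉ G ∪ hbig.toFinset := by simpa [hδG] using hδbig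
      simp only [hδG, hδ, if_false] at hSδ ⊢
      linarith

theorem exists_strictMono_abs_alternating_sum_le {Δ : Type*} (y : ℕ → Δ → ℝ)
    (hy : ∀ k, Tendsto (y k) cofinite (𝓝 0)) {M : ℝ} (hM : ∀ k δ, |y k δ| ≤ M) (n : ℕ) :
    ∃ s : ℕ → ℕ, StrictMono s ∧ ∀ δ, |∑ k ∈ range n, (-1) ^ k * y (s k) δ| ≤ 3 * M + 1 := by
  obtain ⟨m, hn⟩ := Nat.even_or_odd' n
  obtain ⟨s, hs, G, hG⟩ := exists_strictMono_abs_alternating_sum_le_of_finset y hy hM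
    (η := 1 / (m + 1)) (by positivity) m
  refine ⟨s, hs, fun δ => ?_⟩
  have hM0 : 0 ≤ M := (abs_nonneg _).trans (hM 0 δ)
  have hpairs : |∑ k ∈ range (2 * m), (-1) ^ k * y (s k) δ| ≤ 2 * M + 1 := by
    have hmη : (m : ℝ) * (1 / (m + 1)) ≤ 1 := by
      rw [mul_one_div, div_le_one (by positivity)]; linarith
    refine (hG δ).trans ?_
    split_ifs <;> linarith
  rcases hn with rfl | rfl
  · linarith
  · rw [sum_range_succ, (even_two_mul m).neg_one_pow, one_mul]
    linarith [abs_add_le (∑ k ∈ range (2 * m), (-1) ^ k * y (s k) δ) (y (s (2 * m)) δ),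
      hM (s (2 * m)) δ]

theorem apply_sum_sign_smul_eq_of_symmetric {X Γ : Type*} [AddCommMonoid X] [Module ℝ X]
    (e : Γ → X) (ns : X → ℝ)
    (hsym : ∀ (π : Γ ≃ Γ) (sgn : Γ → ℝ), (∀ γ, sgn γ = 1 ∨ sgn γ = -1) →
      ∀ (F : Finset Γ) (a : Γ → ℝ),
        ns (∑ γ ∈ F, (sgn γ * a γ) • e (π γ)) = ns (∑ γ ∈ F, a γ • e γ))
    {u v : ℕ → Γ} (hu : Function.Injective u) (hv : Function.Injective v)
    {ε : ℕ → ℝ} (hε : ∀ k, ε k = 1 ∨ ε k = -1) (n : ℕ) :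
    ns (∑ k ∈ range n, ε k • e (u k)) = ns (∑ k ∈ range n, e (v k)) := by
  classical
  obtain ⟨π, hπ⟩ := Equiv.Perm.exists_extending_pair (fun k : Fin n => v k) (fun k => u k)
    (hv.comp Fin.val_injective) (hu.comp Fin.val_injective)
  have key := hsym π (fun γ => ε (Function.invFun v γ)) (fun γ => hε _) ((range n).image v) 1
  rw [sum_image hv.injOn, sum_image hv.injOn] at key
  convert key using 2
  · refine sum_congr rfl fun k hk => ?_
    rw [Function.leftInverse_invFun hv k, Pi.one_apply, mul_one, hπ ⟨k, mem_range.1 hk⟩]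
  · simp

theorem lambda_bounded_of_embeds_c0_general
    {X : Type*} [NormedAddCommGroup X] [NormedSpace ℝ X]
    {Γ : Type*} (e : Γ → X)
    (K : ℝ)
    (ns : X → ℝ)
    (hns : ∀ x : X, ‖x‖ ≤ ns x ∧ ns x ≤ K * ‖x‖)
    (hnorme : ∀ γ, ns (e γ) = 1)
    (hsym : ∀ (π : Γ ≃ Γ) (sgn : Γ → ℝ), (∀ γ, sgn γ = 1 ∨ sgn γ = -1) →
      ∀ (F : Finset Γ) (a : Γ → ℝ),
        ns (∑ γ ∈ F, (sgn γ * a γ) • e (π γ)) = ns (∑ γ ∈ F, a γ • e γ))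
    (g : ℕ → Γ) (hg : Function.Injective g)
    (lam : ℕ → ℝ) (hlam : ∀ n, lam n = ns (∑ k ∈ Finset.range n, e (g k)))
    {Δ : Type*} [TopologicalSpace Δ] [DiscreteTopology Δ]
    (T : X →L[ℝ] C₀(Δ, ℝ))
    (hbelow : ∃ c : ℝ, 0 < c ∧ ∀ x : X, c * ‖x‖ ≤ ‖T x‖) :
    ∃ B : ℝ, ∀ n : ℕ, lam n ≤ B := by
  obtain ⟨c, hc, hTc⟩ := hbelow
  have hy : ∀ k, Tendsto (⇑(T (e (g k)))) cofinite (𝓝 0) := fun k =>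
    cocompact_eq_cofinite Δ ▸ zero_at_infty (T (e (g k)))
  have hyT : ∀ k δ, |T (e (g k)) δ| ≤ ‖T‖ := fun k δ => by
    have he : ‖e (g k)‖ ≤ 1 := (hns _).1.trans_eq (hnorme _)
    simpa using (ZeroAtInftyContinuousMap.norm_coe_le_norm _ δ).trans (T.le_opNorm_of_le he)
  refine ⟨|K| * ((3 * ‖T‖ + 1) / c), fun n => ?_⟩
  obtain ⟨s, hs, hsum⟩ := exists_strictMono_abs_alternating_sum_le _ hy hyT n
  set x := ∑ k ∈ range n, ((-1 : ℝ) ^ k) • e (g (s k))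
  have hlamx : lam n = ns x :=
    (hlam n).trans (apply_sum_sign_smul_eq_of_symmetric e ns hsym (hg.comp hs.injective) hg
      (fun k => neg_one_pow_eq_or ℝ k) n).symm
  have hTx : ‖T x‖ ≤ 3 * ‖T‖ + 1 :=
    (ZeroAtInftyContinuousMap.norm_le (by positivity)).2 fun δ => by
      simpa [x, map_sum, map_smul] using hsum δ
  have hx : ‖x‖ ≤ (3 * ‖T‖ + 1) / c := by
    rw [le_div_iff₀ hc]; linarith [hTc x]
  calc lam n = ns x := hlamx
    _ ≤ K * ‖x‖ := (hns x).2
    _ ≤ |K| * ‖x‖ := mul_le_mul_of_nonneg_right (le_abs_self K) (norm_nonneg x)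
    _ ≤ |K| * ((3 * ‖T‖ + 1) / c) := mul_le_mul_of_nonneg_left hx (abs_nonneg K)

/-- If a Banach space `X` with a normalized symmetric basis `(e γ)` (with symmetrized norm
`ns`) embeds into `c₀(Δ)` via a bounded linear map bounded below, then the sequence
`λ(n) = ‖∑_{k<n} e_{γ_k}‖ₛ` is bounded. -/
theorem lambda_bounded_of_embeds_c0
    {X : Type*} [NormedAddCommGroup X] [NormedSpace ℝ X] [CompleteSpace X]
    {Γ : Type*} [DecidableEq Γ] (e : Γ → X) (estar : Γ → StrongDual ℝ X)
    (hbio : ∀ γ δ, estar γ (e δ) = if γ = δ then (1 : ℝ) else 0)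
    (hspanX : (Submodule.span ℝ (Set.range e)).topologicalClosure = ⊤)
    (K : ℝ) (hK : 1 ≤ K)
    (ns : X → ℝ)
    (hns : ∀ x : X, ‖x‖ ≤ ns x ∧ ns x ≤ K * ‖x‖)
    (hnorme : ∀ γ, ns (e γ) = 1)
    (hsym : ∀ (π : Γ ≃ Γ) (sgn : Γ → ℝ), (∀ γ, sgn γ = 1 ∨ sgn γ = -1) →
      ∀ (F : Finset Γ) (a : Γ → ℝ),
        ns (∑ γ ∈ F, (sgn γ * a γ) • e (π γ)) = ns (∑ γ ∈ F, a γ • e γ))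
    (g : ℕ → Γ) (hg : Function.Injective g)
    (lam : ℕ → ℝ) (hlam : ∀ n, lam n = ns (∑ k ∈ Finset.range n, e (g k)))
    {Δ : Type*} [TopologicalSpace Δ] [DiscreteTopology Δ]
    (T : X →L[ℝ] C₀(Δ, ℝ))
    (hbelow : ∃ c : ℝ, 0 < c ∧ ∀ x : X, c * ‖x‖ ≤ ‖T x‖) :
    ∃ B : ℝ, ∀ n : ℕ, lam n ≤ B :=
  lambda_bounded_of_embeds_c0_general e K ns hns hnorme hsym g hg lam hlam T hbelow
end

section
/- Let $w_n = 1/n$. In $d_*(w,1) = d_*(w,1,\mathbb{N})$ with $\lambda(k) = k/\mu(k)$ and $\mu(k) = \sum_{i=1}^k 1/i$, we have $\sup_n \|\sum_{k=1}^n e_k/\lambda(k)\| = \infty$; in fact $\|\sum_{k=1}^n e_k/\lambda(k)\| \ge \frac{1}{1+\log n}\sum_{k=1}^n \frac{\log k}{k} \ge \frac{\log^2(n) - \log^2(3)}{2(1+\log n)}$ for $n \ge 3$. -/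
noncomputable section

/-- The norm of the predual `d_*(w,1,ℕ)`: `‖x‖ = sup_k x̄(k)` where
`x̄(k) = max { (∑_{i≤k} |x(γ_i)|) / (∑_{i≤k} w_i) : γ_1,…,γ_k distinct }`. -/
def lorentzPredualNorm (w : ℕ → ℝ) (x : ℕ → ℝ) : ℝ :=
  ⨆ k : ℕ, sSup {r : ℝ | ∃ g : Fin (k + 1) → ℕ, Function.Injective g ∧
    r = (∑ i, |x (g i)|) / (∑ i : Fin (k + 1), w ((i : ℕ) + 1))}

/-! Testing the norm on the first `n` coordinates gives
`‖∑_{k ≤ n} e_k/λ(k)‖ ≥ μ(n)⁻¹ ∑_{k ≤ n} μ(k)/k`. With `log k ≤ μ(k) ≤ 1 + log k` and the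
comparison `∑_{k=3}^n log k / k ≥ ∫_3^{n+1} log t / t dt = (log² (n+1) - log² 3)/2`
(valid since `log t / t` decreases for `t ≥ e`), the lower bound grows like `(log n)/2`. -/

open Finset Real Filter

section LorentzPredualNorm

variable {w x : ℕ → ℝ} {n : ℕ}

lemma sum_comp_le_sum_of_injective {α ι : Type*} [DecidableEq α] [Fintype ι] {f : α → ℝ}
    {s : Finset α} (hf : ∀ a, 0 ≤ f a) (hfs : ∀ a ∉ s, f a = 0) {g : ι → α}
    (hg : Function.Injective g) : ∑ i, f (g i) ≤ ∑ a ∈ s, f a := by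
  rw [← sum_image fun _ _ _ _ h => hg h]
  calc ∑ a ∈ univ.image g, f a = ∑ a ∈ univ.image g ∩ s, f a :=
        (sum_subset inter_subset_left fun a ha has =>
          hfs a fun h => has (mem_inter.2 ⟨ha, h⟩)).symm
    _ ≤ ∑ a ∈ s, f a := sum_le_sum_of_subset_of_nonneg inter_subset_right fun a _ _ => hf a

lemma lorentzPredual_ratio_le (hw : ∀ i, 0 ≤ w i) (hw1 : 0 < w 1) (hx : ∀ i, n ≤ i → x i = 0)
    {k : ℕ} {g : Fin (k + 1) → ℕ} (hg : Function.Injective g) :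
    (∑ i, |x (g i)|) / (∑ i : Fin (k + 1), w ((i : ℕ) + 1)) ≤ (∑ i ∈ range n, |x i|) / w 1 := by
  refine div_le_div₀ (sum_nonneg fun i _ => abs_nonneg _)
    (sum_comp_le_sum_of_injective (fun _ => abs_nonneg _) (fun i hi => ?_) hg) hw1
    (single_le_sum (f := fun i : Fin (k + 1) => w ((i : ℕ) + 1)) (fun _ _ => hw _) (mem_univ 0))
  rw [hx i (by simpa using hi), abs_zero]

theorem sum_range_div_le_lorentzPredualNorm (hw : ∀ i, 0 ≤ w i) (hw1 : 0 < w 1)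
    (hx : ∀ i, n ≤ i → x i = 0) (hn : n ≠ 0) :
    (∑ i ∈ range n, |x i|) / ∑ i ∈ range n, w (i + 1) ≤ lorentzPredualNorm w x := by
  obtain ⟨m, rfl⟩ := Nat.exists_eq_succ_of_ne_zero hn
  -- `sSup` and `⨆` of sets unbounded above are junk `0` in `ℝ`; finite support bounds them by `C`.
  set C := (∑ i ∈ range (m + 1), |x i|) / w 1
  have hC : 0 ≤ C := div_nonneg (sum_nonneg fun i _ => abs_nonneg _) hw1.le
  have hbdd : ∀ k, ∀ r ∈ {r : ℝ | ∃ g : Fin (k + 1) → ℕ, Function.Injective g ∧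
      r = (∑ i, |x (g i)|) / (∑ i : Fin (k + 1), w ((i : ℕ) + 1))}, r ≤ C := by
    rintro k r ⟨g, hg, rfl⟩
    exact lorentzPredual_ratio_le hw hw1 hx hg
  have hmem : (∑ i ∈ range (m + 1), |x i|) / ∑ i ∈ range (m + 1), w (i + 1) ∈
      {r : ℝ | ∃ g : Fin (m + 1) → ℕ, Function.Injective g ∧
        r = (∑ i, |x (g i)|) / (∑ i : Fin (m + 1), w ((i : ℕ) + 1))} :=
    ⟨Fin.val, Fin.val_injective, by
      rw [Fin.sum_univ_eq_sum_range (fun i => |x i|), Fin.sum_univ_eq_sum_range (fun i => w (i + 1))]⟩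
  calc _ ≤ _ := le_csSup ⟨C, hbdd m⟩ hmem
    _ ≤ lorentzPredualNorm w x :=
      le_ciSup (f := fun k => sSup _) ⟨C, by rintro _ ⟨k, rfl⟩; exact Real.sSup_le (hbdd k) hC⟩ m

end LorentzPredualNorm

lemma integral_log_div_self {a b : ℝ} (ha : 0 < a) (hab : a ≤ b) :
    ∫ t in a..b, log t / t = (log b ^ 2 - log a ^ 2) / 2 := by
  have hpos : ∀ t ∈ Set.uIcc a b, 0 < t := fun t ht => by
    rw [Set.uIcc_of_le hab] at ht; exact ha.trans_le ht.1
  have hderiv : ∀ t ∈ Set.uIcc a b, HasDerivAt (fun t => log t ^ 2 / 2) (log t / t) t := by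
    intro t ht
    refine (((hasDerivAt_log (hpos t ht).ne').pow 2).div_const 2).congr_deriv ?_
    norm_num
    ring
  have hcont : ContinuousOn (fun t => log t / t) (Set.uIcc a b) :=
    (continuousOn_log.mono fun t ht => (hpos t ht).ne').div continuousOn_id
      fun t ht => (hpos t ht).ne'
  rw [intervalIntegral.integral_eq_sub_of_hasDerivAt hderiv hcont.intervalIntegrable, sub_div]

lemma log_sq_sub_div_two_le_sum_log_div {n : ℕ} (hn : 3 ≤ n) :
    (log n ^ 2 - log 3 ^ 2) / 2 ≤ ∑ k ∈ range n, log (k + 1) / (k + 1) := by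
  have hterm : ∀ j : ℕ, 0 ≤ log j / j := fun j => div_nonneg (log_natCast_nonneg j) j.cast_nonneg
  have hanti : AntitoneOn (fun t : ℝ => log t / t) (Set.Icc ((3 : ℕ) : ℝ) ((n + 1 : ℕ) : ℝ)) :=
    log_div_self_antitoneOn.mono fun t ht => by
      have := exp_one_lt_d9
      simp only [Set.mem_Ici, Nat.cast_ofNat] at ht ⊢
      linarith [ht.1]
  calc (log n ^ 2 - log 3 ^ 2) / 2 ≤ (log (n + 1 : ℕ) ^ 2 - log 3 ^ 2) / 2 := by
        have : 0 ≤ log n := log_natCast_nonneg n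
        gcongr
        omega
    _ = ∫ t in ((3 : ℕ) : ℝ)..((n + 1 : ℕ) : ℝ), log t / t := by
        rw [integral_log_div_self (by norm_num) (by exact_mod_cast (by omega : 3 ≤ n + 1))]
        norm_num
    _ ≤ ∑ j ∈ Ico 3 (n + 1), log j / j := hanti.integral_le_sum_Ico (by omega)
    _ ≤ ∑ j ∈ Ico 1 (n + 1), log j / j :=
        sum_le_sum_of_subset_of_nonneg (Ico_subset_Ico_left (by norm_num)) fun j _ _ => hterm j
    _ = ∑ k ∈ range n, log (k + 1) / (k + 1) := by
        rw [sum_Ico_eq_sum_range]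
        simp [add_comm]

lemma tendsto_sq_sub_div_two_mul_one_add_atTop (c : ℝ) :
    Tendsto (fun L : ℝ => (L ^ 2 - c) / (2 * (1 + L))) atTop atTop := by
  have hlin : Tendsto (fun L : ℝ => (L - 1) / 2) atTop atTop :=
    (tendsto_atTop_add_const_right _ _ tendsto_id).atTop_div_const (by norm_num)
  have hdecay : Tendsto (fun L : ℝ => (1 - c) / (2 * (1 + L))) atTop (nhds 0) :=
    tendsto_const_nhds.div_atTop
      ((tendsto_atTop_add_const_left _ 1 tendsto_id).const_mul_atTop (by norm_num))
  refine (hlin.atTop_add hdecay).congr' ?_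
  filter_upwards [eventually_gt_atTop 0] with L hL
  field_simp
  ring

lemma harmonic_cast_nonneg (k : ℕ) : (0 : ℝ) ≤ harmonic k := by
  unfold harmonic
  positivity

lemma sum_log_div_le_sum_harmonic_div (n : ℕ) :
    ∑ k ∈ range n, log (k + 1) / (k + 1) ≤ ∑ k ∈ range n, (harmonic (k + 1) : ℝ) / (k + 1) := by
  gcongr with k
  calc log (k + 1) ≤ log ((k + 1 + 1 : ℕ)) := log_le_log (by positivity) (by push_cast; linarith)
    _ ≤ harmonic (k + 1) := log_add_one_le_harmonic (k + 1)

lemma sum_log_div_div_le_lorentzPredualNorm {n : ℕ} (hn : n ≠ 0) :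
    (∑ k ∈ range n, log (k + 1) / (k + 1)) / (1 + log n) ≤
      lorentzPredualNorm (fun i => 1 / i)
        (fun i => if i ∈ range n then (harmonic (i + 1) : ℝ) / (i + 1) else 0) := by
  have hnorm := sum_range_div_le_lorentzPredualNorm (w := fun i : ℕ => 1 / (i : ℝ))
    (x := fun i => if i ∈ range n then (harmonic (i + 1) : ℝ) / (i + 1) else 0)
    (fun i => by positivity) (by norm_num) (fun i hi => if_neg (by simpa using hi)) hn
  have hnum : ∑ i ∈ range n, |if i ∈ range n then (harmonic (i + 1) : ℝ) / (i + 1) else 0| =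
      ∑ k ∈ range n, (harmonic (k + 1) : ℝ) / (k + 1) :=
    sum_congr rfl fun i hi => by
      rw [if_pos hi, abs_of_nonneg (div_nonneg (harmonic_cast_nonneg _) (by positivity))]
  have hden : ∑ i ∈ range n, 1 / ((i + 1 : ℕ) : ℝ) = harmonic n := by
    simp [harmonic, one_div]
  rw [hnum, hden] at hnorm
  refine (div_le_div₀ (sum_nonneg fun k _ => div_nonneg (harmonic_cast_nonneg _) (by positivity))
    (sum_log_div_le_sum_harmonic_div n) (by exact_mod_cast harmonic_pos hn)
    (harmonic_le_one_add_log n)).trans hnorm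

/-- In `d_*(w,1)` with `w_n = 1/n`, `μ(k) = ∑_{i=1}^k 1/i` and `λ(k) = k/μ(k)`, the norms
`‖∑_{k=1}^n e_k/λ(k)‖` are unbounded; indeed for `n ≥ 3`,
`‖∑_{k=1}^n e_k/λ(k)‖ ≥ (∑_{k=1}^n (log k)/k)/(1 + log n) ≥ (log²n - log²3)/(2(1+log n))`. -/
theorem lorentz_predual_harmonic_lambda_unbounded
    (w : ℕ → ℝ) (hw : ∀ n, w n = 1 / n)
    (mu lam : ℕ → ℝ)
    (hmu : ∀ k, mu k = ∑ i ∈ Finset.range k, 1 / ((i : ℝ) + 1))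
    (hlam : ∀ k, lam k = k / mu k)
    (x : ℕ → ℕ → ℝ)
    (hx : ∀ n, x n = fun i => ∑ k ∈ Finset.range n, (1 / lam (k + 1)) * (if i = k then 1 else 0)) :
    (∀ n : ℕ, 3 ≤ n →
      (1 / (1 + Real.log n)) * ∑ k ∈ Finset.range n, Real.log (k + 1) / (k + 1)
        ≤ lorentzPredualNorm w (x n) ∧
      (Real.log n ^ 2 - Real.log 3 ^ 2) / (2 * (1 + Real.log n))
        ≤ (1 / (1 + Real.log n)) * ∑ k ∈ Finset.range n, Real.log (k + 1) / (k + 1)) ∧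
    ¬ ∃ B : ℝ, ∀ n : ℕ, lorentzPredualNorm w (x n) ≤ B := by
  have hx' : ∀ n, x n = fun i => if i ∈ range n then (harmonic (i + 1) : ℝ) / (i + 1) else 0 := by
    intro n
    ext i
    simp [hx, hlam, hmu, harmonic, one_div]
  have hnorm_ge : ∀ n : ℕ, 3 ≤ n →
      (1 / (1 + log n)) * ∑ k ∈ range n, log (k + 1) / (k + 1) ≤ lorentzPredualNorm w (x n) :=
    fun n hn => by
      rw [one_div_mul_eq_div, hx', funext hw]
      exact sum_log_div_div_le_lorentzPredualNorm (by omega)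
  have hsum_ge : ∀ n : ℕ, 3 ≤ n → (log n ^ 2 - log 3 ^ 2) / (2 * (1 + log n)) ≤
      (1 / (1 + log n)) * ∑ k ∈ range n, log (k + 1) / (k + 1) := fun n hn => by
    rw [one_div_mul_eq_div, ← div_div]
    have : 0 ≤ log n := log_natCast_nonneg n
    gcongr
    exact log_sq_sub_div_two_le_sum_log_div hn
  refine ⟨fun n hn => ⟨hnorm_ge n hn, hsum_ge n hn⟩, fun ⟨B, hB⟩ => ?_⟩
  obtain ⟨n, hnB, hn⟩ := (((tendsto_sq_sub_div_two_mul_one_add_atTop (log 3 ^ 2)).comp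
    (tendsto_log_atTop.comp tendsto_natCast_atTop_atTop)).eventually_gt_atTop B |>.and
    (eventually_ge_atTop 3)).exists
  exact (hnB.trans_le ((hsum_ge n hn).trans (hnorm_ge n hn))).not_ge (hB n)

end
end

section
/- Let $M$ be a non-degenerate Orlicz function (convex, $M(0)=0$, $M(t)>0$ for $t>0$). For $j\in\mathbb{N}$ let $n_j$ be minimal with $1/n_j \le M(2^{-j})$. Then there exists $K>1$ with $\sum_{n=1}^\infty M(K^{-1}M^{-1}(1/n)) < \infty$ if and only if there exists $K>1$ with $\sum_{j=1}^\infty \frac{M(K^{-1}2^{-j})}{M(2^{-j})} < \infty$. -/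
/-!
Write `q_j = 2^{-(j+1)}` and `n_j = ⌈1 / M(q_j)⌉`. For `n_j ≤ n < n_{j+1}` we have
`q_{j+1} < M⁻¹(1/n) ≤ q_j`, so on this block the terms `M(K⁻¹ M⁻¹(1/n))` are bounded below, and
the terms `M((2K)⁻¹ M⁻¹(1/n))` bounded above, by the same number `c_j = M(K⁻¹ q_{j+1})`.
Convexity gives `M(q_{j+1}) ≤ M(q_j) / 2`, whence `1/M(q_j) - 1 < n_{j+1} - n_j < 1/M(q_{j+1}) + 1`.
Now `c_j / M(q_j)` is the `j`-th term of the dyadic series for `2K` and `c_j / M(q_{j+1})` the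
`(j+1)`-st term for `K`, while the errors `c_j ≤ M(q_{j+1})` are summable by the ratio test. So
each series converging for `K` makes the other converge for `2K`.
-/

open Filter Finset

section Blocks

variable {u : ℕ → ℕ} {f c : ℕ → ℝ}

theorem Finset.sum_range_sum_Ico_of_monotone {β : Type*} [AddCommMonoid β] (f : ℕ → β)
    (hu : Monotone u) (m : ℕ) :
    ∑ k ∈ range m, ∑ n ∈ Ico (u k) (u (k + 1)), f n = ∑ n ∈ Ico (u 0) (u m), f n := by
  induction m with
  | zero => simp
  | succ m ih => rw [sum_range_succ, ih, sum_Ico_consecutive _ (hu m.zero_le) (hu m.le_succ)]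

theorem summable_blocks_of_summable (hu : Monotone u) (hf : Summable f) (hf0 : ∀ n, 0 ≤ f n)
    (hc0 : ∀ k, 0 ≤ c k) (hcf : ∀ k, ∀ n ∈ Ico (u k) (u (k + 1)), c k ≤ f n) :
    Summable fun k ↦ ((u (k + 1) - u k : ℕ) : ℝ) * c k := by
  refine summable_of_sum_range_le (c := ∑' n, f n)
    (fun k ↦ mul_nonneg (Nat.cast_nonneg _) (hc0 k)) fun m ↦ ?_
  calc ∑ k ∈ range m, ((u (k + 1) - u k : ℕ) : ℝ) * c k
      ≤ ∑ k ∈ range m, ∑ n ∈ Ico (u k) (u (k + 1)), f n :=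
        sum_le_sum fun k _ ↦ by simpa using sum_le_sum (hcf k)
    _ = ∑ n ∈ Ico (u 0) (u m), f n := sum_range_sum_Ico_of_monotone f hu m
    _ ≤ ∑' n, f n := hf.sum_le_tsum _ fun n _ ↦ hf0 n

theorem summable_of_summable_blocks (hu : Monotone u) (hu_top : Tendsto u atTop atTop)
    (hf0 : ∀ n, 0 ≤ f n) (hfc : ∀ k, ∀ n ∈ Ico (u k) (u (k + 1)), f n ≤ c k)
    (hc : Summable fun k ↦ ((u (k + 1) - u k : ℕ) : ℝ) * c k) : Summable f := by
  have block_le (k : ℕ) :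
      ∑ n ∈ Ico (u k) (u (k + 1)), f n ≤ ((u (k + 1) - u k : ℕ) : ℝ) * c k := by
    simpa using sum_le_sum (hfc k)
  refine summable_of_sum_range_le hf0
    (c := ∑ n ∈ range (u 0), f n + ∑' k, ((u (k + 1) - u k : ℕ) : ℝ) * c k) fun N ↦ ?_
  obtain ⟨m, hm⟩ := (hu_top.eventually_ge_atTop N).exists
  calc ∑ n ∈ range N, f n
      ≤ ∑ n ∈ range (u m), f n :=
        sum_le_sum_of_subset_of_nonneg (range_mono hm) fun n _ _ ↦ hf0 n
    _ = ∑ n ∈ range (u 0), f n + ∑ k ∈ range m, ∑ n ∈ Ico (u k) (u (k + 1)), f n := by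
        rw [sum_range_sum_Ico_of_monotone f hu, sum_range_add_sum_Ico _ (hu m.zero_le)]
    _ ≤ ∑ n ∈ range (u 0), f n + ∑' k, ((u (k + 1) - u k : ℕ) : ℝ) * c k := by
        gcongr
        exact (sum_le_sum fun k _ ↦ block_le k).trans <| hc.sum_le_tsum _ fun k _ ↦
          (sum_nonneg fun n _ ↦ hf0 n).trans (block_le k)

end Blocks

theorem ConvexOn.map_div_two_le {g : ℝ → ℝ} (hg : ConvexOn ℝ (Set.Ici 0) g) (hg0 : g 0 = 0)
    {t : ℝ} (ht : 0 ≤ t) : g (t / 2) ≤ g t / 2 := by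
  have := hg.2 (Set.mem_Ici.2 ht) (Set.mem_Ici.2 le_rfl) (by norm_num : (0 : ℝ) ≤ 1 / 2)
    (by norm_num : (0 : ℝ) ≤ 1 / 2) (by norm_num)
  simp only [smul_eq_mul, mul_zero, add_zero, hg0] at this
  rwa [one_div_mul_eq_div, one_div_mul_eq_div] at this

namespace Orlicz

noncomputable def dyadic (j : ℕ) : ℝ := 2 ^ (-((j : ℝ) + 1))

theorem dyadic_pos (j : ℕ) : 0 < dyadic j := by unfold dyadic; positivity

theorem dyadic_succ (j : ℕ) : dyadic (j + 1) = dyadic j / 2 := by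
  rw [dyadic, dyadic, Nat.cast_succ, neg_add', Real.rpow_sub_one two_ne_zero]

variable {M Minv : ℝ → ℝ}

theorem map_nonneg (hM0 : M 0 = 0) (hMpos : ∀ t, 0 < t → 0 < M t) {t : ℝ} (ht : 0 ≤ t) :
    0 ≤ M t :=
  ht.eq_or_lt.elim (fun h ↦ h ▸ hM0.ge) fun h ↦ (hMpos t h).le

theorem inv_le_iff_le_map (hMmono : MonotoneOn M (Set.Ici 0))
    (hMinv_nonneg : ∀ s, 0 ≤ s → 0 ≤ Minv s) (hMinv_left : ∀ t, 0 ≤ t → Minv (M t) = t)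
    (hMinv_right : ∀ s, 0 ≤ s → M (Minv s) = s) {s t : ℝ} (hs : 0 ≤ s) (ht : 0 ≤ t) :
    Minv s ≤ t ↔ s ≤ M t := by
  have hinj : Set.InjOn M (Set.Ici 0) := Set.LeftInvOn.injOn (f₁' := Minv) hMinv_left
  rw [← (hMmono.strictMonoOn_of_injOn hinj).le_iff_le (hMinv_nonneg s hs) ht, hMinv_right s hs]

theorem lt_inv_iff_map_lt (hMmono : MonotoneOn M (Set.Ici 0))
    (hMinv_nonneg : ∀ s, 0 ≤ s → 0 ≤ Minv s) (hMinv_left : ∀ t, 0 ≤ t → Minv (M t) = t)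
    (hMinv_right : ∀ s, 0 ≤ s → M (Minv s) = s) {s t : ℝ} (hs : 0 ≤ s) (ht : 0 ≤ t) :
    t < Minv s ↔ M t < s :=
  not_iff_not.1 <| by
    simpa only [not_lt] using inv_le_iff_le_map hMmono hMinv_nonneg hMinv_left hMinv_right hs ht

theorem map_dyadic_succ_le (hM0 : M 0 = 0) (hMconv : ConvexOn ℝ (Set.Ici 0) M) (j : ℕ) :
    M (dyadic (j + 1)) ≤ M (dyadic j) / 2 :=
  dyadic_succ j ▸ hMconv.map_div_two_le hM0 (dyadic_pos j).le

theorem summable_map_dyadic (hM0 : M 0 = 0) (hMpos : ∀ t, 0 < t → 0 < M t)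
    (hMconv : ConvexOn ℝ (Set.Ici 0) M) : Summable fun j ↦ M (dyadic j) := by
  refine summable_of_ratio_norm_eventually_le (r := 1 / 2) (by norm_num) (.of_forall fun j ↦ ?_)
  rw [Real.norm_of_nonneg (hMpos _ (dyadic_pos _)).le,
    Real.norm_of_nonneg (hMpos _ (dyadic_pos _)).le]
  linarith [map_dyadic_succ_le hM0 hMconv j]

theorem map_mul_le_map_mul (hMmono : MonotoneOn M (Set.Ici 0)) {a x y : ℝ} (ha : 0 ≤ a)
    (hx : 0 ≤ x) (hxy : x ≤ y) : M (a * x) ≤ M (a * y) :=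
  hMmono (Set.mem_Ici.2 (mul_nonneg ha hx)) (Set.mem_Ici.2 (mul_nonneg ha (hx.trans hxy)))
    (mul_le_mul_of_nonneg_left hxy ha)

theorem summable_map_inv_mul_dyadic (hM0 : M 0 = 0) (hMpos : ∀ t, 0 < t → 0 < M t)
    (hMmono : MonotoneOn M (Set.Ici 0)) (hMconv : ConvexOn ℝ (Set.Ici 0) M) {K : ℝ}
    (hK : 1 ≤ K) : Summable fun j ↦ M (K⁻¹ * dyadic j) := by
  refine (summable_map_dyadic hM0 hMpos hMconv).of_nonneg_of_le
    (fun j ↦ map_nonneg hM0 hMpos (by have := dyadic_pos j; positivity)) fun j ↦ ?_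
  have hq := dyadic_pos j
  exact hMmono (Set.mem_Ici.2 (by positivity)) hq.le
    (mul_le_of_le_one_left hq.le (inv_le_one_of_one_le₀ hK))

/-- The least `n` with `1 / n ≤ M (2^{-(j+1)})`, the paper's `n_{j+1}`. -/
noncomputable def blockIndex (M : ℝ → ℝ) (j : ℕ) : ℕ := ⌈(M (dyadic j))⁻¹⌉₊

theorem blockIndex_mono (hM0 : M 0 = 0) (hMpos : ∀ t, 0 < t → 0 < M t)
    (hMconv : ConvexOn ℝ (Set.Ici 0) M) : Monotone (blockIndex M) :=
  monotone_nat_of_le_succ fun j ↦ Nat.ceil_mono <| inv_anti₀ (hMpos _ (dyadic_pos _)) <|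
    (map_dyadic_succ_le hM0 hMconv j).trans (half_le_self (hMpos _ (dyadic_pos j)).le)

theorem tendsto_blockIndex (hM0 : M 0 = 0) (hMpos : ∀ t, 0 < t → 0 < M t)
    (hMconv : ConvexOn ℝ (Set.Ici 0) M) : Tendsto (blockIndex M) atTop atTop :=
  tendsto_nat_ceil_atTop.comp <| tendsto_inv_nhdsGT_zero.comp <| tendsto_nhdsWithin_iff.2
    ⟨(summable_map_dyadic hM0 hMpos hMconv).tendsto_atTop_zero,
      .of_forall fun j ↦ hMpos _ (dyadic_pos j)⟩

theorem mem_Ioc_of_mem_block (hMpos : ∀ t, 0 < t → 0 < M t) (hMmono : MonotoneOn M (Set.Ici 0))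
    (hMinv_nonneg : ∀ s, 0 ≤ s → 0 ≤ Minv s) (hMinv_left : ∀ t, 0 ≤ t → Minv (M t) = t)
    (hMinv_right : ∀ s, 0 ≤ s → M (Minv s) = s) {j n : ℕ}
    (hn : n ∈ Ico (blockIndex M j) (blockIndex M (j + 1))) :
    Minv (n : ℝ)⁻¹ ∈ Set.Ioc (dyadic (j + 1)) (dyadic j) := by
  rw [mem_Ico, blockIndex, blockIndex, Nat.ceil_le, Nat.lt_ceil] at hn
  have hMq := hMpos _ (dyadic_pos j)
  have hn_pos : (0 : ℝ) < n := (inv_pos.2 hMq).trans_le hn.1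
  have hn_inv : 0 ≤ (n : ℝ)⁻¹ := by positivity
  constructor
  · rw [lt_inv_iff_map_lt hMmono hMinv_nonneg hMinv_left hMinv_right hn_inv (dyadic_pos _).le]
    exact lt_inv_comm₀ (hMpos _ (dyadic_pos _)) hn_pos |>.2 hn.2
  · rw [inv_le_iff_le_map hMmono hMinv_nonneg hMinv_left hMinv_right hn_inv (dyadic_pos _).le]
    exact inv_le_of_inv_le₀ hMq hn.1

theorem inv_map_dyadic_lt_blockIndex_sub (hM0 : M 0 = 0) (hMpos : ∀ t, 0 < t → 0 < M t)
    (hMconv : ConvexOn ℝ (Set.Ici 0) M) (j : ℕ) :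
    (M (dyadic j))⁻¹ < ((blockIndex M (j + 1) - blockIndex M j : ℕ) : ℝ) + 1 := by
  have hMq := hMpos _ (dyadic_pos j)
  have hdouble : 2 * (M (dyadic j))⁻¹ ≤ (M (dyadic (j + 1)))⁻¹ := by
    rw [← div_eq_mul_inv, ← inv_div]
    exact inv_anti₀ (hMpos _ (dyadic_pos _)) (map_dyadic_succ_le hM0 hMconv j)
  rw [Nat.cast_sub (blockIndex_mono hM0 hMpos hMconv j.le_succ)]
  have := Nat.le_ceil (M (dyadic (j + 1)))⁻¹
  have := Nat.ceil_lt_add_one (inv_pos.2 hMq).le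
  unfold blockIndex
  linarith

theorem blockIndex_sub_lt (hMpos : ∀ t, 0 < t → 0 < M t) (j : ℕ) :
    ((blockIndex M (j + 1) - blockIndex M j : ℕ) : ℝ) < (M (dyadic (j + 1)))⁻¹ + 1 :=
  (Nat.cast_le.2 (Nat.sub_le _ _)).trans_lt <|
    Nat.ceil_lt_add_one (inv_pos.2 (hMpos _ (dyadic_pos _))).le


theorem inv_mul_dyadic_succ (K : ℝ) (j : ℕ) : K⁻¹ * dyadic (j + 1) = (2 * K)⁻¹ * dyadic j := by
  rw [dyadic_succ, mul_inv]; ring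

theorem summable_ratio_of_summable (hM0 : M 0 = 0) (hMpos : ∀ t, 0 < t → 0 < M t)
    (hMmono : MonotoneOn M (Set.Ici 0)) (hMconv : ConvexOn ℝ (Set.Ici 0) M)
    (hMinv_nonneg : ∀ s, 0 ≤ s → 0 ≤ Minv s) (hMinv_left : ∀ t, 0 ≤ t → Minv (M t) = t)
    (hMinv_right : ∀ s, 0 ≤ s → M (Minv s) = s) {K : ℝ} (hK : 1 ≤ K)
    (h : Summable fun n : ℕ ↦ M (K⁻¹ * Minv (n : ℝ)⁻¹)) :
    Summable fun j ↦ M ((2 * K)⁻¹ * dyadic j) / M (dyadic j) := by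
  have hK0 : 0 ≤ K⁻¹ := by positivity
  have hc0 (j : ℕ) : 0 ≤ M (K⁻¹ * dyadic (j + 1)) :=
    map_nonneg hM0 hMpos (mul_nonneg hK0 (dyadic_pos _).le)
  have hblocks := summable_blocks_of_summable (c := fun j ↦ M (K⁻¹ * dyadic (j + 1)))
    (blockIndex_mono hM0 hMpos hMconv) h
    (fun n ↦ map_nonneg hM0 hMpos (mul_nonneg hK0 (hMinv_nonneg _ (by positivity)))) hc0
    fun j n hn ↦ map_mul_le_map_mul hMmono hK0 (dyadic_pos _).le
      (mem_Ioc_of_mem_block hMpos hMmono hMinv_nonneg hMinv_left hMinv_right hn).1.le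
  refine .of_nonneg_of_le (fun j ↦ div_nonneg ?_ (hMpos _ (dyadic_pos j)).le) (fun j ↦ ?_)
    (hblocks.add ((summable_nat_add_iff 1).2
      (summable_map_inv_mul_dyadic hM0 hMpos hMmono hMconv hK)))
  · exact map_nonneg hM0 hMpos (by have := dyadic_pos j; positivity)
  calc M ((2 * K)⁻¹ * dyadic j) / M (dyadic j)
      = M (K⁻¹ * dyadic (j + 1)) * (M (dyadic j))⁻¹ := by
        rw [inv_mul_dyadic_succ, div_eq_mul_inv]
    _ ≤ M (K⁻¹ * dyadic (j + 1)) * (((blockIndex M (j + 1) - blockIndex M j : ℕ) : ℝ) + 1) :=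
        mul_le_mul_of_nonneg_left (inv_map_dyadic_lt_blockIndex_sub hM0 hMpos hMconv j).le
          (hc0 j)
    _ = _ := by ring

theorem summable_of_summable_ratio (hM0 : M 0 = 0) (hMpos : ∀ t, 0 < t → 0 < M t)
    (hMmono : MonotoneOn M (Set.Ici 0)) (hMconv : ConvexOn ℝ (Set.Ici 0) M)
    (hMinv_nonneg : ∀ s, 0 ≤ s → 0 ≤ Minv s) (hMinv_left : ∀ t, 0 ≤ t → Minv (M t) = t)
    (hMinv_right : ∀ s, 0 ≤ s → M (Minv s) = s) {K : ℝ} (hK : 1 ≤ K)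
    (h : Summable fun j ↦ M (K⁻¹ * dyadic j) / M (dyadic j)) :
    Summable fun n : ℕ ↦ M ((2 * K)⁻¹ * Minv (n : ℝ)⁻¹) := by
  have hK0 : 0 ≤ (2 * K)⁻¹ := by positivity
  have hc0 (j : ℕ) : 0 ≤ M (K⁻¹ * dyadic (j + 1)) :=
    map_nonneg hM0 hMpos (by have := dyadic_pos (j + 1); positivity)
  refine summable_of_summable_blocks (c := fun j ↦ M (K⁻¹ * dyadic (j + 1)))
    (blockIndex_mono hM0 hMpos hMconv) (tendsto_blockIndex hM0 hMpos hMconv)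
    (fun n ↦ map_nonneg hM0 hMpos (mul_nonneg hK0 (hMinv_nonneg _ (by positivity))))
    (fun j n hn ↦ ?_)
    (.of_nonneg_of_le (fun j ↦ mul_nonneg (Nat.cast_nonneg _) (hc0 j)) (fun j ↦ ?_)
      (((summable_nat_add_iff 1).2 h).add
        ((summable_nat_add_iff 1).2 (summable_map_inv_mul_dyadic hM0 hMpos hMmono hMconv hK))))
  · have hmem := mem_Ioc_of_mem_block hMpos hMmono hMinv_nonneg hMinv_left hMinv_right hn
    rw [inv_mul_dyadic_succ]
    exact map_mul_le_map_mul hMmono hK0 ((dyadic_pos _).trans hmem.1).le hmem.2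
  calc ((blockIndex M (j + 1) - blockIndex M j : ℕ) : ℝ) * M (K⁻¹ * dyadic (j + 1))
      ≤ ((M (dyadic (j + 1)))⁻¹ + 1) * M (K⁻¹ * dyadic (j + 1)) :=
        mul_le_mul_of_nonneg_right (blockIndex_sub_lt hMpos j).le (hc0 j)
    _ = _ := by ring

end Orlicz

/-- For a non-degenerate Orlicz function `M` (convex, increasing, `M 0 = 0`, `M t > 0` for
`t > 0`) with inverse `Minv` on `[0, ∞)`:  there exists `K > 1` with
`∑_n M(K⁻¹ M⁻¹(1/n)) < ∞` if and only if there exists `K > 1` with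
`∑_j M(K⁻¹ 2⁻ʲ)/M(2⁻ʲ) < ∞`. -/
theorem orlicz_summability_equiv
    (M : ℝ → ℝ) (Minv : ℝ → ℝ)
    (hM0 : M 0 = 0)
    (hMpos : ∀ t : ℝ, 0 < t → 0 < M t)
    (hMmono : MonotoneOn M (Set.Ici 0))
    (hMconv : ConvexOn ℝ (Set.Ici 0) M)
    (hMinv_nonneg : ∀ s : ℝ, 0 ≤ s → 0 ≤ Minv s)
    (hMinv_left : ∀ t : ℝ, 0 ≤ t → Minv (M t) = t)
    (hMinv_right : ∀ s : ℝ, 0 ≤ s → M (Minv s) = s) :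
    (∃ K : ℝ, 1 < K ∧ Summable (fun n : ℕ => M (K⁻¹ * Minv (1 / ((n : ℝ) + 1))))) ↔
    (∃ K : ℝ, 1 < K ∧
      Summable (fun j : ℕ => M (K⁻¹ * 2 ^ (-((j : ℝ) + 1))) / M (2 ^ (-((j : ℝ) + 1))))) := by
  have hshift (K : ℝ) : Summable (fun n : ℕ => M (K⁻¹ * Minv (1 / ((n : ℝ) + 1)))) ↔
      Summable fun n : ℕ ↦ M (K⁻¹ * Minv (n : ℝ)⁻¹) := by
    rw [← summable_nat_add_iff 1 (f := fun n : ℕ ↦ M (K⁻¹ * Minv (n : ℝ)⁻¹))]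
    simp only [Nat.cast_add_one, one_div]
  simp only [hshift]
  constructor
  · rintro ⟨K, hK, h⟩
    exact ⟨2 * K, by linarith, Orlicz.summable_ratio_of_summable hM0 hMpos hMmono hMconv
      hMinv_nonneg hMinv_left hMinv_right hK.le h⟩
  · rintro ⟨K, hK, h⟩
    exact ⟨2 * K, by linarith, Orlicz.summable_of_summable_ratio hM0 hMpos hMmono hMconv
      hMinv_nonneg hMinv_left hMinv_right hK.le h⟩
end

section
/- For an ordinal $\alpha$, define $q(\eta)$ as the unique ordinal with $\omega\, q(\eta) \le \eta < \omega(q(\eta)+1)$, and let $M_\alpha$ be the tree of finite sequences $t : n \to \omega\alpha$ ($1 \le n < \omega$) satisfying $t(i+1) < \omega\, q(t(i))$ whenever $i+1 < n$, ordered by end-extension. Then for every ordinal $\xi$, the $\xi$-th Cantor–Bendixson derivative of $M_\alpha$ (in the coarse wedge topology) equals $\{t \in M_\alpha : \xi \le q(t(|t|-1))\}$; consequently the scattered height of $M_\alpha$ is exactly $\alpha$. -/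
noncomputable section

/-- `q(η)` is the unique ordinal with `ω q(η) ≤ η < ω (q(η)+1)`, i.e. `η / ω`. -/
def qOrd (η : Ordinal) : Ordinal := η / Ordinal.omega0

/-- The tree `M_α`: non-empty finite sequences `t` of ordinals below `ω α` such that
`t(i+1) < ω q(t(i))`, represented as lists and ordered by end-extension. -/
def Mset (α : Ordinal) : Set (List Ordinal) :=
  {l | l ≠ [] ∧ (∀ x ∈ l, x < Ordinal.omega0 * α) ∧
    l.Chain' fun x y => y < Ordinal.omega0 * qOrd x}

/-- The coarse wedge topology on `M_α`, generated by the basic sets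
`U_{s,F} = {s} ∪ {t : s ≺ t, t(|s|) ∉ F}` for `s ∈ M_α` and finite `F ⊆ s(|s|-1)`. -/
def coarseWedge (α : Ordinal) : TopologicalSpace (Mset α) :=
  TopologicalSpace.generateFrom
    {V | ∃ (s : List Ordinal) (_ : s ∈ Mset α) (F : Finset Ordinal),
      (∀ x ∈ F, x < s.getLastD 0) ∧
      V = {t : Mset α | t.val = s ∨
        (s <+: t.val ∧ s ≠ t.val ∧ t.val.getD s.length 0 ∉ F)}}

/-- The derived set of `A`: the set of accumulation points of `A`. -/
def dSet {Y : Type*} [TopologicalSpace Y] (A : Set Y) : Set Y :=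
  {x | x ∈ closure (A \ {x})}

/-- The iterated Cantor–Bendixson derivative of the whole space:
`CBd 0 = univ`, `CBd (ξ+1) = (CBd ξ)'`, with intersections at limits. -/
def CBd {Y : Type*} [TopologicalSpace Y] : Ordinal → Set Y
  | ξ => ⋂ (η : Ordinal) (_ : η < ξ), dSet (CBd η)
termination_by ξ => ξ

/-!
Along every branch of `M_α` the value `q` strictly decreases, so a proper extension of `t` has a
smaller `q` at its last entry. Conversely, if `ξ < q(last t)` then `t` has infinitely many
one-step extensions `t ⌢ (ω ξ + n)`, all with `q = ξ`, and a basic neighbourhood `U_{s,F}` of `t`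
excludes only finitely many of them. Hence the derived set of `{t : ξ ≤ q(last t)}` is
`{t : ξ < q(last t)}`, and transfinite induction identifies the `ξ`-th derivative. Since
`q(last t) < α` always while `[ω β]` has `q = β` for each `β < α`, the first empty derivative is
the `α`-th.
-/

open Ordinal

lemma qOrd_lt_iff {η β : Ordinal} : qOrd η < β ↔ η < ω * β :=
  (lt_mul_iff_div_lt omega0_ne_zero).symm

lemma qOrd_omega0_mul_add_natCast (ξ : Ordinal) (n : ℕ) : qOrd (ω * ξ + n) = ξ := by
  rw [qOrd, mul_add_div _ omega0_ne_zero, div_eq_zero_of_lt (natCast_lt_omega0 n), add_zero]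

lemma exists_qOrd_eq_notMem (ξ : Ordinal) (F : Finset Ordinal) : ∃ η ∉ F, qOrd η = ξ := by
  have hinj : Function.Injective fun n : ℕ => ω * ξ + n := fun m n h => by
    simpa using add_left_cancel_iff.mp h
  obtain ⟨_, ⟨n, rfl⟩, hF⟩ := (Set.infinite_range_of_injective hinj).exists_notMem_finset F
  exact ⟨_, hF, qOrd_omega0_mul_add_natCast ξ n⟩

lemma List.getLastD_eq_getLast {α : Type*} {l : List α} (h : l ≠ []) (d : α) :
    l.getLastD d = l.getLast h := by
  rw [List.getLastD_eq_getLast?, List.getLast?_eq_getLast_of_ne_nil h, Option.getD_some]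

namespace Mset

variable {α : Ordinal}

lemma singleton_mem {η : Ordinal} (h : η < ω * α) : [η] ∈ Mset α :=
  ⟨List.cons_ne_nil _ _, by simpa using h, List.isChain_singleton _⟩

lemma qOrd_getLastD_lt {t : List Ordinal} (ht : t ∈ Mset α) : qOrd (t.getLastD 0) < α := by
  rw [List.getLastD_eq_getLast ht.1]
  exact qOrd_lt_iff.mpr (ht.2.1 _ (List.getLast_mem ht.1))

lemma append_singleton_mem {t : List Ordinal} (ht : t ∈ Mset α) {η : Ordinal}
    (hη : qOrd η < qOrd (t.getLastD 0)) : t ++ [η] ∈ Mset α := by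
  have hηα : η < ω * α := qOrd_lt_iff.mp (hη.trans (qOrd_getLastD_lt ht))
  obtain ⟨hne, hlt, hchain⟩ := ht
  rw [List.getLastD_eq_getLast hne] at hη
  refine ⟨by simp, by simpa [or_imp, forall_and] using ⟨hlt, hηα⟩,
    hchain.append (List.isChain_singleton _) ?_⟩
  simpa [List.getLast?_eq_getLast_of_ne_nil hne] using qOrd_lt_iff.mp hη

lemma pairwise_qOrd_gt {t : List Ordinal} (ht : t ∈ Mset α) :
    t.Pairwise fun x y => qOrd y < qOrd x := by
  have : (t.map qOrd).IsChain (· > ·) :=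
    List.isChain_map _ |>.mpr (ht.2.2.imp fun _ _ h => qOrd_lt_iff.mpr h)
  exact List.pairwise_map.mp this.pairwise

lemma qOrd_getLastD_lt_of_prefix {s t : List Ordinal} (hs : s ≠ []) (ht : t ∈ Mset α)
    (hst : s <+: t) (hne : s ≠ t) : qOrd (t.getLastD 0) < qOrd (s.getLastD 0) := by
  obtain ⟨r, rfl⟩ := hst
  have hr : r ≠ [] := by rintro rfl; simp at hne
  rw [List.getLastD_eq_getLast ht.1, List.getLast_append_of_ne_nil _ hr,
    List.getLastD_eq_getLast hs]
  exact (List.pairwise_append.mp (pairwise_qOrd_gt ht)).2.2 _ (List.getLast_mem hs) _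
    (List.getLast_mem hr)

end Mset

/-- The basic open set `U_{s,F}` of the coarse wedge topology. -/
def wedgeNbhd (α : Ordinal) (s : List Ordinal) (F : Finset Ordinal) : Set (Mset α) :=
  {t | t.val = s ∨ (s <+: t.val ∧ s ≠ t.val ∧ t.val.getD s.length 0 ∉ F)}

section wedgeNbhd

variable {α : Ordinal}

lemma self_mem_wedgeNbhd (t : Mset α) (F : Finset Ordinal) : t ∈ wedgeNbhd α t.val F :=
  Or.inl rfl

lemma append_singleton_mem_wedgeNbhd {t : Mset α} {F : Finset Ordinal} {η : Ordinal}
    (hη : η ∉ F) (h : t.val ++ [η] ∈ Mset α) : ⟨t.val ++ [η], h⟩ ∈ wedgeNbhd α t.val F :=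
  Or.inr ⟨List.prefix_append _ _, by simp, by simpa using hη⟩

lemma wedgeNbhd_subset {s : List Ordinal} {F G : Finset Ordinal} {t : Mset α}
    (ht : t ∈ wedgeNbhd α s F) (hFG : s = t.val → F ⊆ G) :
    wedgeNbhd α t.val G ⊆ wedgeNbhd α s F := by
  rintro t' (h | ⟨htt', hne', hG⟩)
  · rwa [Subtype.ext h]
  right
  rcases ht with hs | ⟨hst, hne, hF⟩
  · subst hs
    exact ⟨htt', hne', fun h => hG (hFG rfl h)⟩
  obtain ⟨r, hr⟩ := htt'
  have hlen : s.length < t.val.length :=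
    lt_of_le_of_ne hst.length_le fun h => hne (hst.eq_of_length h)
  refine ⟨hst.trans ⟨r, hr⟩, fun h => ?_, ?_⟩
  · have := congrArg List.length hr
    simp only [← h, List.length_append] at this
    omega
  · rwa [← hr, List.getD_append _ _ _ _ hlen]

lemma isTopologicalBasis_wedgeNbhd :
    @TopologicalSpace.IsTopologicalBasis (Mset α) (coarseWedge α)
      {V | ∃ (s : List Ordinal) (_ : s ∈ Mset α) (F : Finset Ordinal),
        (∀ x ∈ F, x < s.getLastD 0) ∧ V = wedgeNbhd α s F} := by
  let _ := coarseWedge α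
  refine .mk ?_ ?_ rfl
  · rintro _ ⟨s₁, -, F₁, hF₁, rfl⟩ _ ⟨s₂, -, F₂, hF₂, rfl⟩ t ⟨ht₁, ht₂⟩
    classical
    let G := (F₁ ∪ F₂).filter (· < t.val.getLastD 0)
    have hFG {s F} (hF : ∀ x ∈ F, x < s.getLastD 0) (hsub : F ⊆ F₁ ∪ F₂) :
        s = t.val → F ⊆ G := by
      rintro rfl x hx
      exact Finset.mem_filter.mpr ⟨hsub hx, hF x hx⟩
    refine ⟨wedgeNbhd α t.val G, ⟨t.val, t.2, G, fun x hx => (Finset.mem_filter.mp hx).2, rfl⟩,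
      self_mem_wedgeNbhd t G, Set.subset_inter ?_ ?_⟩
    · exact wedgeNbhd_subset ht₁ (hFG hF₁ Finset.subset_union_left)
    · exact wedgeNbhd_subset ht₂ (hFG hF₂ Finset.subset_union_right)
  · exact Set.eq_univ_of_forall fun t =>
      ⟨_, ⟨t.val, t.2, ∅, by simp, rfl⟩, self_mem_wedgeNbhd t ∅⟩

end wedgeNbhd

lemma dSet_setOf_le_qOrd (α ξ : Ordinal) :
    @dSet _ (coarseWedge α) {t : Mset α | ξ ≤ qOrd (t.val.getLastD 0)} =
      {t | ξ < qOrd (t.val.getLastD 0)} := by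
  let _ := coarseWedge α
  ext t
  simp only [dSet, Set.mem_ofPred_eq, isTopologicalBasis_wedgeNbhd.mem_closure_iff]
  constructor
  · intro h
    obtain ⟨t', ht' | ⟨hpre, hne, -⟩, hξ, ht't⟩ :=
      h _ ⟨t.val, t.2, ∅, by simp, rfl⟩ (self_mem_wedgeNbhd t ∅)
    · exact absurd (Subtype.ext ht') ht't
    · exact hξ.trans_lt (Mset.qOrd_getLastD_lt_of_prefix t.2.1 t'.2 hpre hne)
  · rintro hξ _ ⟨s, -, F, -, rfl⟩ ht
    obtain ⟨η, hηF, rfl⟩ := exists_qOrd_eq_notMem ξ F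
    have hmem := Mset.append_singleton_mem t.2 hξ
    refine ⟨⟨_, hmem⟩, wedgeNbhd_subset ht (fun _ => subset_rfl)
      (append_singleton_mem_wedgeNbhd hηF hmem), ?_, ?_⟩
    · simp only [Set.mem_ofPred_eq, List.getLastD_concat, le_rfl]
    · simp [Subtype.ext_iff]

lemma CBd_eq_setOf_le {Y : Type*} [TopologicalSpace Y] (f : Y → Ordinal)
    (hf : ∀ ξ, dSet {y | ξ ≤ f y} = {y | ξ < f y}) (ξ : Ordinal) :
    CBd ξ = {y | ξ ≤ f y} := by
  induction ξ using WellFoundedLT.induction with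
  | _ ξ IH =>
    rw [CBd.eq_def]
    ext y
    simp only [Set.mem_iInter, Set.mem_ofPred_eq]
    refine ⟨fun h => forall_lt_iff_le.mp fun η hη => ?_, fun h η hη => ?_⟩
    · simpa [IH η hη, hf] using h η hη
    · simpa [IH η hη, hf] using hη.trans_le h

lemma sInf_setOf_CBd_eq_empty {Y : Type*} [TopologicalSpace Y] (f : Y → Ordinal)
    (hf : ∀ ξ, dSet {y | ξ ≤ f y} = {y | ξ < f y}) {α : Ordinal} (hlt : ∀ y, f y < α)
    (hge : ∀ β < α, ∃ y, β ≤ f y) :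
    sInf {Ω : Ordinal | CBd Ω = (∅ : Set Y)} = α := by
  have hα : CBd α = (∅ : Set Y) := by
    simpa [CBd_eq_setOf_le f hf, Set.eq_empty_iff_forall_notMem] using hlt
  refine le_antisymm (csInf_le' hα) (le_csInf ⟨α, hα⟩ fun Ω hΩ => not_lt.mp fun hΩα => ?_)
  obtain ⟨y, hy⟩ := hge Ω hΩα
  exact Set.eq_empty_iff_forall_notMem.mp hΩ y (by rw [CBd_eq_setOf_le f hf]; exact hy)

/-- For every ordinal `ξ`, the `ξ`-th Cantor–Bendixson derivative of `M_α` in the coarse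
wedge topology is `{t ∈ M_α : ξ ≤ q(t(|t|-1))}`; consequently the scattered height of
`M_α` (the least `Ω` with empty `Ω`-th derivative) is exactly `α`. -/
theorem cantorBendixson_Malpha (α : Ordinal) :
    (∀ ξ : Ordinal,
      @CBd _ (coarseWedge α) ξ = {t : Mset α | ξ ≤ qOrd (t.val.getLastD 0)}) ∧
    sInf {Ω : Ordinal | @CBd _ (coarseWedge α) Ω = (∅ : Set (Mset α))} = α := by
  let _ := coarseWedge α
  refine ⟨CBd_eq_setOf_le _ (dSet_setOf_le_qOrd α),
    sInf_setOf_CBd_eq_empty _ (dSet_setOf_le_qOrd α) (fun t => Mset.qOrd_getLastD_lt t.2)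
      fun β hβ => ⟨⟨[ω * β], Mset.singleton_mem ?_⟩, ?_⟩⟩
  · exact mul_lt_mul_of_pos_left hβ omega0_pos
  · simp [qOrd, mul_div_cancel _ omega0_ne_zero]

end
end
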